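/- arXiv:2308.09696 — 5 statements merged into one kernel-verified Lean document; each statement's English description precedes it below -/
import Mathlib

section
/- For n ≥ 3, two vertices A and B of the inclusion graph on nonempty proper subsets of {1,...,n} are at distance 3 if and only if B is the complement of A. -/
open SimpleGraph Finset

variable {V : Type*}

/-- A set of vertices is resolving if distance vectors to it distinguish vertices. -/
def IsResolving (G : SimpleGraph V) (S : Set V) : Prop :=
  ∀ u v : V, (∀ w ∈ S, G.dist u w = G.dist v w) → u = v

/-- The metric dimension: the least size of a (finite) resolving set. -/
noncomputable def metricDim (G : SimpleGraph V) : ℕ :=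
  sInf {k | ∃ S : Finset V, S.card = k ∧ IsResolving G ↑S}

/-- Two vertices are mutually maximally distant. -/
def MMD (G : SimpleGraph V) (u v : V) : Prop :=
  u ≠ v ∧ (∀ w, G.Adj u w → G.dist v w ≤ G.dist u v) ∧
    (∀ w, G.Adj v w → G.dist u w ≤ G.dist u v)

/-- The strong resolving graph: edges between mutually maximally distant vertices. -/
def strongResolvingGraph (G : SimpleGraph V) : SimpleGraph V where
  Adj u v := MMD G u v
  symm := by
    constructor
    rintro u v ⟨hne, h1, h2⟩
    refine ⟨hne.symm, ?_, ?_⟩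
    · intro w hw
      rw [SimpleGraph.dist_comm (u := v) (v := u)]
      exact h2 w hw
    · intro w hw
      rw [SimpleGraph.dist_comm (u := v) (v := u)]
      exact h1 w hw
  loopless := ⟨fun v h => h.1 rfl⟩

/-- A set strongly resolving a graph. -/
def IsStrongResolving (G : SimpleGraph V) (S : Set V) : Prop :=
  ∀ u v : V, u ≠ v → ∃ w ∈ S,
    G.dist w u = G.dist w v + G.dist v u ∨ G.dist w v = G.dist w u + G.dist u v

/-- Strong metric dimension. -/
noncomputable def sdim (G : SimpleGraph V) : ℕ :=
  sInf {k | ∃ S : Finset V, S.card = k ∧ IsStrongResolving G ↑S}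

/-- An independent set of vertices. -/
def IsIndepFinset (G : SimpleGraph V) (S : Finset V) : Prop :=
  ∀ u ∈ S, ∀ v ∈ S, u ≠ v → ¬ G.Adj u v

/-- Independence number. -/
noncomputable def indepNum (G : SimpleGraph V) : ℕ :=
  sSup {k | ∃ S : Finset V, S.card = k ∧ IsIndepFinset G S}

/-- Vertices of the inclusion graph on `{1,...,n}`: nonempty proper subsets. -/
def SubVert (n : ℕ) := {A : Finset (Fin n) // A.Nonempty ∧ A ≠ Finset.univ}

/-- The inclusion graph on nonempty proper subsets of `{1,...,n}`. -/
def inclGraph (n : ℕ) : SimpleGraph (SubVert n) where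
  Adj A B := A.1 ⊂ B.1 ∨ B.1 ⊂ A.1
  symm := ⟨fun _ _ h => h.symm⟩
  loopless := ⟨fun A h => by
    rcases h with h | h <;> exact (ssubset_irrefl A.1) h⟩

/-- Complement of a vertex of the inclusion graph. -/
def complVert {n : ℕ} (A : SubVert n) : SubVert n :=
  ⟨A.1ᶜ,
    Finset.nonempty_iff_ne_empty.mpr fun h => A.2.2 (by simpa using h),
    fun h => (Finset.nonempty_iff_ne_empty.mp A.2.1) (by simpa using h)⟩

/-- Vertices of the inclusion ideal graph of a product of chain rings:
tuples in a product of chains, excluding bottom and top. -/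
def ChainVert {m : ℕ} (d : Fin m → ℕ) := {v : ∀ i, Fin (d i + 2) // v ≠ ⊥ ∧ v ≠ ⊤}

/-- The inclusion graph on a product of chains (minus bottom and top),
modelling the inclusion ideal graph of a product of principal ideal rings. -/
def chainGraph {m : ℕ} (d : Fin m → ℕ) : SimpleGraph (ChainVert d) where
  Adj I J := I.1 < J.1 ∨ J.1 < I.1
  symm := ⟨fun _ _ h => h.symm⟩
  loopless := ⟨fun I h => by rcases h with h | h <;> exact lt_irrefl _ h⟩

/-!
If `A` and `B` are not complementary, then either `A ∩ B` is nonempty or `A ∪ B` is proper, and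
that set is equal or adjacent to both, so `A` and `B` are at distance at most `2`. A set and its
complement are neither comparable nor comparable with a common third set, so they are at
distance at least `3`; for `n ≥ 3` one of them, say `A`, has two elements, and for `a ∈ A` the
path `A ⊃ {a} ⊂ {a} ∪ Aᶜ ⊃ Aᶜ` has length `3`.
-/

@[simp]
lemma complVert_val {n : ℕ} (A : SubVert n) : (complVert A).1 = A.1ᶜ := rfl

@[simp]
lemma complVert_complVert {n : ℕ} (A : SubVert n) : complVert (complVert A) = A :=
  Subtype.ext (compl_compl A.1)

namespace SubVert

variable {n : ℕ}

lemma not_subset_compl (A : SubVert n) : ¬ A.1 ⊆ A.1ᶜ := fun h =>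
  A.2.1.ne_empty (le_compl_self.mp h)

lemma not_compl_subset (A : SubVert n) : ¬ A.1ᶜ ⊆ A.1 := fun h =>
  A.2.2 (compl_le_self.mp h)

end SubVert

namespace inclGraph

variable {n : ℕ}

lemma edist_le_one_of_subset {A B : SubVert n} (h : A.1 ⊆ B.1) : (inclGraph n).edist A B ≤ 1 := by
  rw [edist_le_one_iff_adj_or_eq]
  rcases h.ssubset_or_eq with h | h
  · exact Or.inl (Or.inl h)
  · exact Or.inr (Subtype.ext h)

lemma edist_le_two_of_common_subset {A B C : SubVert n} (hA : C.1 ⊆ A.1) (hB : C.1 ⊆ B.1) :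
    (inclGraph n).edist A B ≤ 2 :=
  calc (inclGraph n).edist A B ≤ (inclGraph n).edist A C + (inclGraph n).edist C B :=
        SimpleGraph.edist_triangle
    _ ≤ 1 + 1 := add_le_add (edist_comm.trans_le (edist_le_one_of_subset hA))
        (edist_le_one_of_subset hB)
    _ = 2 := one_add_one_eq_two

lemma edist_le_two_of_common_superset {A B C : SubVert n} (hA : A.1 ⊆ C.1) (hB : B.1 ⊆ C.1) :
    (inclGraph n).edist A B ≤ 2 :=
  calc (inclGraph n).edist A B ≤ (inclGraph n).edist A C + (inclGraph n).edist C B :=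
        SimpleGraph.edist_triangle
    _ ≤ 1 + 1 := add_le_add (edist_le_one_of_subset hA)
        (edist_comm.trans_le (edist_le_one_of_subset hB))
    _ = 2 := one_add_one_eq_two

lemma edist_le_two_of_ne_complVert {A B : SubVert n} (hB : B ≠ complVert A) :
    (inclGraph n).edist A B ≤ 2 := by
  by_cases hmeet : (A.1 ∩ B.1).Nonempty
  · exact edist_le_two_of_common_subset (C := ⟨A.1 ∩ B.1, hmeet,
      ne_top_of_le_ne_top A.2.2 inter_subset_left⟩) inter_subset_left inter_subset_right
  by_cases hjoin : A.1 ∪ B.1 = univ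
  · have hAB : IsCompl A.1 B.1 :=
      ⟨disjoint_iff_inter_eq_empty.mpr (not_nonempty_iff_eq_empty.mp hmeet),
        codisjoint_iff.mpr hjoin⟩
    exact absurd (Subtype.ext hAB.compl_eq.symm) hB
  · exact edist_le_two_of_common_superset (C := ⟨A.1 ∪ B.1, A.2.1.mono subset_union_left,
      hjoin⟩) subset_union_left subset_union_right

lemma two_lt_edist_complVert (A : SubVert n) : 2 < (inclGraph n).edist A (complVert A) := by
  refine two_lt_edist_iff.mpr ⟨fun h => ?_, ?_, ?_⟩
  · exact A.not_subset_compl (congrArg Subtype.val h).le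
  · rintro (h | h)
    · exact A.not_subset_compl h.subset
    · exact A.not_compl_subset h.subset
  · refine Set.eq_empty_of_forall_notMem fun C hC => ?_
    obtain ⟨hAC, hCA⟩ := (mem_commonNeighbors _).mp hC
    rcases hAC with hAC | hAC <;> rcases hCA with hCA | hCA
    · exact C.2.2 (univ_subset_iff.mp (by simpa using union_subset hAC.subset hCA.subset))
    · exact A.not_subset_compl (hAC.subset.trans hCA.subset)
    · exact A.not_compl_subset (hCA.subset.trans hAC.subset)
    · obtain ⟨c, hc⟩ := C.2.1
      exact mem_compl.mp (hCA.subset hc) (hAC.subset hc)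

lemma edist_complVert_le_three_of_one_lt_card {A : SubVert n} (hA : 1 < A.1.card) :
    (inclGraph n).edist A (complVert A) ≤ 3 := by
  obtain ⟨a, ha, x, hx, hax⟩ := one_lt_card.mp hA
  let C : SubVert n := ⟨{a}, singleton_nonempty a,
    ne_top_of_le_ne_top A.2.2 (singleton_subset_iff.mpr ha)⟩
  let D : SubVert n := ⟨insert a A.1ᶜ, insert_nonempty _ _,
    fun h => by simpa [hax.symm, hx] using h.ge (mem_univ x)⟩
  calc (inclGraph n).edist A (complVert A)
      ≤ (inclGraph n).edist A D + (inclGraph n).edist D (complVert A) :=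
        SimpleGraph.edist_triangle
    _ ≤ 2 + 1 := add_le_add
        (edist_le_two_of_common_subset (C := C) (singleton_subset_iff.mpr ha)
          (singleton_subset_iff.mpr (mem_insert_self a _)))
        (edist_comm.trans_le (edist_le_one_of_subset (subset_insert a _)))
    _ = 3 := rfl

lemma edist_complVert (hn : 3 ≤ n) (A : SubVert n) : (inclGraph n).edist A (complVert A) = 3 := by
  refine le_antisymm ?_ (Order.add_one_le_of_lt (two_lt_edist_complVert A))
  by_cases hA : 1 < A.1.card
  · exact edist_complVert_le_three_of_one_lt_card hA
  · have hAc : 1 < (complVert A).1.card := by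
      rw [complVert_val, card_compl, Fintype.card_fin]
      omega
    simpa [edist_comm] using edist_complVert_le_three_of_one_lt_card hAc

end inclGraph

theorem stmt2_general (n : ℕ) (hn : 3 ≤ n) (A B : SubVert n) :
    (inclGraph n).dist A B = 3 ↔ B = complVert A := by
  constructor
  · intro h
    by_contra hB
    have h2 : (inclGraph n).dist A B ≤ 2 :=
      ENat.toNat_le_of_le_natCast (inclGraph.edist_le_two_of_ne_complVert hB)
    omega
  · rintro rfl
    rw [SimpleGraph.dist, inclGraph.edist_complVert hn A, ENat.toNat_ofNat]

theorem stmt2 (n : ℕ) (hn : 3 ≤ n) (A B : SubVert n) (hAB : A ≠ B) :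
    (inclGraph n).dist A B = 3 ↔ B = complVert A :=
  stmt2_general n hn A B
end

section
/- For n ≥ 5, the metric dimension of the inclusion graph on nonempty proper subsets of an n-element set equals n; for n = 3 and n = 4 it equals n − 1. -/
open SimpleGraph Finset

variable {V : Type*}

/-!
For `n ≥ 3` the distance between distinct vertices `A`, `B` of `inclGraph n` is `1` if they
are comparable, `3` if `B = Aᶜ` and `2` otherwise. Hence `i ∈ A` iff `d(A, {i}) ≤ 1`, so the
`n` singletons resolve the graph, and for `n ≤ 4` a finite check shows that `n - 1` of them
already do. Conversely, if `S` is resolving, the `2 ^ n - 2 - 2|S|` vertices outside `S` and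
the complements of its elements have distance vectors in `{1, 2} ^ S`, so
`2 ^ n ≤ 2 ^ |S| + 2 |S| + 2`; this forces `|S| ≥ n` for `n ≥ 5` and `|S| ≥ n - 1` for `n = 3, 4`.
-/

namespace SimpleGraph

variable {G : SimpleGraph V} {u v : V}

lemma dist_eq_two_of_mem_commonNeighbors {w : V} (huv : u ≠ v) (hadj : ¬G.Adj u v)
    (hw : w ∈ G.commonNeighbors u v) : G.dist u v = 2 := by
  rw [dist, edist_eq_two_iff.mpr ⟨huv, hadj, ⟨w, hw⟩⟩]
  rfl

lemma dist_eq_three_of_walk (p : G.Walk u v) (hp : p.length = 3) (huv : u ≠ v)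
    (hadj : ¬G.Adj u v) (hcommon : G.commonNeighbors u v = ∅) : G.dist u v = 3 := by
  have hlt : 2 < G.edist u v := two_lt_edist_iff.mpr ⟨huv, hadj, hcommon⟩
  have hle : G.edist u v ≤ 3 := by simpa [hp] using p.edist_le
  rw [dist, le_antisymm hle (Order.add_one_le_of_lt hlt)]
  rfl

lemma IsResolving.card_le_pow {S T : Finset V} {D : Finset ℕ} (hS : IsResolving G ↑S)
    (hD : ∀ x ∈ T, ∀ w ∈ S, G.dist x w ∈ D) : #T ≤ #D ^ #S := by
  classical
  calc #T ≤ #(Fintype.piFinset fun _ : S ↦ D) := by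
        refine card_le_card_of_injOn (fun x w ↦ G.dist x w) (fun x hx ↦ ?_) ?_
        · simpa [Fintype.mem_piFinset] using fun w hw ↦ hD x hx w hw
        · intro x _ y _ hxy
          exact hS x y fun w hw ↦ congrFun hxy ⟨w, hw⟩
    _ = #D ^ #S := by simp

end SimpleGraph

lemma metricDim_eq_of_exists_isResolving {G : SimpleGraph V} {k : ℕ}
    (hk : ∃ S : Finset V, #S = k ∧ IsResolving G ↑S)
    (hmin : ∀ S : Finset V, IsResolving G ↑S → k ≤ #S) : metricDim G = k :=
  le_antisymm (Nat.sInf_le hk) (le_csInf ⟨k, hk⟩ (by rintro _ ⟨S, rfl, hS⟩; exact hmin S hS))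

namespace inclGraph

variable {n : ℕ}

instance : DecidableEq (SubVert n) :=
  inferInstanceAs (DecidableEq {A : Finset (Fin n) // A.Nonempty ∧ A ≠ univ})

instance : Fintype (SubVert n) :=
  inferInstanceAs (Fintype {A : Finset (Fin n) // A.Nonempty ∧ A ≠ univ})

lemma card_subVert (hn : 1 ≤ n) : Fintype.card (SubVert n) = 2 ^ n - 2 := by
  have hfilter : univ.filter (fun A : Finset (Fin n) ↦ A.Nonempty ∧ A ≠ univ) =
      univ \ {∅, univ} := by
    ext A
    simp [nonempty_iff_ne_empty]
  have hne : (∅ : Finset (Fin n)) ≠ univ := (univ_nonempty_iff.mpr ⟨⟨0, hn⟩⟩).ne_empty.symm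
  change Fintype.card {A : Finset (Fin n) // A.Nonempty ∧ A ≠ univ} = _
  rw [Fintype.card_subtype, hfilter, card_sdiff_of_subset (subset_univ _), card_univ,
    Fintype.card_finset, Fintype.card_fin, card_pair hne]

lemma not_subset_of_not_adj {A B : SubVert n} (hAB : A ≠ B) (hadj : ¬(inclGraph n).Adj A B) :
    ¬A.1 ⊆ B.1 :=
  fun h ↦ hadj (Or.inl (h.ssubset_of_ne fun h' ↦ hAB (Subtype.ext h')))

lemma exists_mem_commonNeighbors {A B : SubVert n} (hAB : A ≠ B)
    (hadj : ¬(inclGraph n).Adj A B) (hcompl : A.1 ≠ B.1ᶜ) :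
    ∃ C, C ∈ (inclGraph n).commonNeighbors A B := by
  have hA := not_subset_of_not_adj hAB hadj
  have hB := not_subset_of_not_adj hAB.symm fun h ↦ hadj h.symm
  simp only [mem_commonNeighbors]
  by_cases hmeet : (A.1 ∩ B.1).Nonempty
  · have hltA : A.1 ∩ B.1 ⊂ A.1 := inf_lt_left.mpr hA
    exact ⟨⟨A.1 ∩ B.1, hmeet, (hltA.trans_le (subset_univ _)).ne⟩,
      Or.inr hltA, Or.inr (inf_lt_right.mpr hB)⟩
  · have hdisj : Disjoint A.1 B.1 :=
      disjoint_iff_inter_eq_empty.mpr (not_nonempty_iff_eq_empty.mp hmeet)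
    exact ⟨⟨A.1 ∪ B.1, A.2.1.mono subset_union_left,
      fun h ↦ hcompl (IsCompl.eq_compl ⟨hdisj, codisjoint_iff.mpr h⟩)⟩,
      Or.inl (left_lt_sup.mpr hB), Or.inl (right_lt_sup.mpr hA)⟩

lemma complVert_complVert (A : SubVert n) : complVert (complVert A) = A :=
  Subtype.ext (compl_compl A.1)

lemma ne_complVert (A : SubVert n) : A ≠ complVert A :=
  fun h ↦ A.2.1.ne_empty (le_compl_self.mp (congrArg Subtype.val h).le)

lemma not_adj_complVert (A : SubVert n) : ¬(inclGraph n).Adj A (complVert A) := by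
  rintro (h | h)
  · exact A.2.1.ne_empty (le_compl_self.mp h.le)
  · exact A.2.2 (compl_le_self.mp h.le)

lemma commonNeighbors_complVert (A : SubVert n) :
    (inclGraph n).commonNeighbors A (complVert A) = ∅ := by
  ext C
  simp only [mem_commonNeighbors, Set.mem_empty_iff_false, iff_false, not_and]
  rintro (hAC | hCA) (hAC' | hCA')
  · exact C.2.2 (top_unique (sup_compl_eq_top (x := A.1) ▸ sup_le hAC.le hAC'.le))
  · exact A.2.1.ne_empty (le_compl_self.mp (hAC.trans hCA').le)
  · exact A.2.2 (compl_le_self.mp (hAC'.trans hCA).le)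
  · exact C.2.1.ne_empty (le_bot_iff.mp (inf_compl_eq_bot (a := A.1) ▸ le_inf hCA.le hCA'.le))

/-- The path `A ⊃ {a} ⊂ {a} ∪ Aᶜ ⊃ Aᶜ`; it needs a second element of `A`. -/
lemma dist_complVert_of_one_lt_card {A : SubVert n} (hA : 1 < #A.1) :
    (inclGraph n).dist A (complVert A) = 3 := by
  obtain ⟨a, ha, b, hb, hab⟩ := one_lt_card.mp hA
  obtain ⟨c, hc⟩ := (complVert A).2.1
  let P : SubVert n :=
    ⟨{a}, singleton_nonempty a, fun h ↦ hab (mem_singleton.mp (h ▸ mem_univ b)).symm⟩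
  let Q : SubVert n := ⟨insert a A.1ᶜ, insert_nonempty _ _, fun h ↦ by
    simpa [hab.symm, hb] using (h.symm ▸ mem_univ b : b ∈ insert a A.1ᶜ)⟩
  have hAP : (inclGraph n).Adj A P :=
    Or.inr ((ssubset_iff_of_subset (singleton_subset_iff.mpr ha)).mpr
      ⟨b, hb, by simpa using hab.symm⟩)
  have hPQ : (inclGraph n).Adj P Q :=
    Or.inl ((ssubset_iff_of_subset (singleton_subset_iff.mpr (mem_insert_self a _))).mpr
      ⟨c, mem_insert_of_mem hc, by simpa using fun h : c = a ↦ (mem_compl.mp hc) (h ▸ ha)⟩)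
  have hQA : (inclGraph n).Adj Q (complVert A) :=
    Or.inr (ssubset_insert (notMem_compl.mpr ha))
  exact dist_eq_three_of_walk (.cons hAP (.cons hPQ (.cons hQA .nil))) rfl (ne_complVert A)
    (not_adj_complVert A) (commonNeighbors_complVert A)

lemma dist_complVert (hn : 3 ≤ n) (A : SubVert n) : (inclGraph n).dist A (complVert A) = 3 := by
  rcases lt_or_ge 1 #A.1 with hA | hA
  · exact dist_complVert_of_one_lt_card hA
  · have hAc : 1 < #(complVert A).1 := by
      have := card_compl A.1
      rw [Fintype.card_fin] at this
      change 1 < #A.1ᶜ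
      omega
    rw [dist_comm, ← dist_complVert_of_one_lt_card hAc, complVert_complVert]

/-- The distance in `inclGraph n`, in a form that `decide` can evaluate. -/
def inclDist (A B : SubVert n) : ℕ :=
  if A = B then 0 else if A.1 ⊂ B.1 ∨ B.1 ⊂ A.1 then 1 else if A.1 = B.1ᶜ then 3 else 2

lemma dist_eq_inclDist (hn : 3 ≤ n) (A B : SubVert n) :
    (inclGraph n).dist A B = inclDist A B := by
  unfold inclDist
  split_ifs with hAB hadj hcompl
  · rw [hAB, dist_self]
  · exact dist_eq_one_iff_adj.mpr hadj
  · rw [show A = complVert B from Subtype.ext hcompl, dist_comm, dist_complVert hn]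
  · obtain ⟨C, hC⟩ := exists_mem_commonNeighbors hAB hadj hcompl
    exact dist_eq_two_of_mem_commonNeighbors hAB hadj hC

lemma isResolving_iff_inclDist (hn : 3 ≤ n) (S : Finset (SubVert n)) :
    IsResolving (inclGraph n) ↑S ↔
      ∀ A B : SubVert n, (∀ w ∈ S, inclDist A w = inclDist B w) → A = B := by
  simp only [IsResolving, mem_coe, dist_eq_inclDist hn]

lemma mem_iff_dist_le_one (hn : 3 ≤ n) {A B : SubVert n} {i : Fin n} (hB : B.1 = {i}) :
    i ∈ A.1 ↔ (inclGraph n).dist A B ≤ 1 := by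
  rw [dist_eq_inclDist hn]
  unfold inclDist
  split_ifs with hAB hadj
  · simp [hAB, hB]
  · rw [hB] at hadj
    rcases hadj with h | h
    · exact absurd (ssubset_singleton_iff.mp h) A.2.1.ne_empty
    · simpa using singleton_subset_iff.mp h.subset
  all_goals
    simp only [Nat.reduceLeDiff, iff_false]
    refine fun hi ↦ hadj (Or.inr (hB ▸ (singleton_subset_iff.mpr hi).ssubset_of_ne ?_))
    exact fun h ↦ hAB (Subtype.ext (h.symm.trans hB.symm))

lemma isResolving_of_forall_singleton (hn : 3 ≤ n) {S : Finset (SubVert n)}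
    (hS : ∀ i, ∃ B ∈ S, B.1 = {i}) : IsResolving (inclGraph n) ↑S := by
  intro A A' h
  refine Subtype.ext (Finset.ext fun i ↦ ?_)
  obtain ⟨B, hBS, hB⟩ := hS i
  rw [mem_iff_dist_le_one hn hB, mem_iff_dist_le_one hn hB, h B hBS]

def singletonVert [Nontrivial (Fin n)] (i : Fin n) : SubVert n :=
  ⟨{i}, singleton_nonempty i, singleton_ne_univ i⟩

lemma singletonVert_injective [Nontrivial (Fin n)] :
    Function.Injective (singletonVert : Fin n → SubVert n) :=
  fun _ _ h ↦ singleton_injective (congrArg Subtype.val h)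

lemma exists_isResolving_card_eq (hn : 3 ≤ n) :
    ∃ S : Finset (SubVert n), #S = n ∧ IsResolving (inclGraph n) ↑S := by
  have : Nontrivial (Fin n) := Fin.nontrivial_iff_two_le.mpr (by omega)
  refine ⟨univ.image singletonVert, ?_, isResolving_of_forall_singleton hn fun i ↦ ?_⟩
  · rw [card_image_of_injective _ singletonVert_injective, card_univ, Fintype.card_fin]
  · exact ⟨singletonVert i, mem_image_of_mem _ (mem_univ i), rfl⟩

lemma exists_isResolving_card_eq_pred (hn : 3 ≤ n) (hn4 : n ≤ 4) :
    ∃ S : Finset (SubVert n), #S = n - 1 ∧ IsResolving (inclGraph n) ↑S := by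
  simp only [isResolving_iff_inclDist hn]
  interval_cases n
  · exact ⟨(univ.erase 0).image singletonVert, by decide, by decide⟩
  · exact ⟨(univ.erase 0).image singletonVert, by decide, by decide⟩

lemma two_pow_le_of_isResolving (hn : 3 ≤ n) {S : Finset (SubVert n)}
    (hS : IsResolving (inclGraph n) ↑S) : 2 ^ n ≤ 2 ^ #S + 2 * #S + 2 := by
  set T := univ \ (S ∪ S.image complVert)
  have hT : #T ≤ 2 ^ #S := by
    refine (hS.card_le_pow (D := {1, 2}) fun A hA w hw ↦ ?_).trans (by simp)
    simp only [T, mem_sdiff, mem_univ, mem_union, mem_image, true_and, not_or, not_exists,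
      not_and] at hA
    have hAw : A ≠ w := fun h ↦ hA.1 (h ▸ hw)
    have hcompl : A.1 ≠ w.1ᶜ := fun h ↦ hA.2 w hw (Subtype.ext h.symm)
    rw [dist_eq_inclDist hn]
    unfold inclDist
    rw [if_neg hAw, if_neg hcompl]
    split_ifs <;> simp
  have hSc : #(S ∪ S.image complVert) ≤ 2 * #S :=
    (card_union_le _ _).trans (by linarith [card_image_le (s := S) (f := complVert)])
  have hcard : Fintype.card (SubVert n) ≤ #T + #(S ∪ S.image complVert) :=
    card_univ (α := SubVert n) ▸ card_le_card_sdiff_add_card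
  rw [card_subVert (by omega)] at hcard
  omega

lemma le_card_of_isResolving (hn : 3 ≤ n) {k : ℕ} (hk : 2 ^ (k - 1) + 2 * (k - 1) + 2 < 2 ^ n)
    {S : Finset (SubVert n)} (hS : IsResolving (inclGraph n) ↑S) : k ≤ #S := by
  by_contra! hSk
  have := two_pow_le_of_isResolving hn hS
  have : 2 ^ #S ≤ 2 ^ (k - 1) := Nat.pow_le_pow_right two_pos (by omega)
  omega

end inclGraph

lemma two_pow_pred_add_lt {n : ℕ} (hn : 5 ≤ n) : 2 ^ (n - 1) + 2 * (n - 1) + 2 < 2 ^ n := by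
  induction n, hn using Nat.le_induction with
  | base => norm_num
  | succ m hm ih =>
    obtain ⟨k, rfl⟩ : ∃ k, m = k + 1 := ⟨m - 1, by omega⟩
    simp only [Nat.add_sub_cancel, pow_succ] at ih ⊢
    omega

theorem stmt7 (n : ℕ) :
    (5 ≤ n → metricDim (inclGraph n) = n) ∧
      ((n = 3 ∨ n = 4) → metricDim (inclGraph n) = n - 1) := by
  constructor
  · intro hn
    exact metricDim_eq_of_exists_isResolving (inclGraph.exists_isResolving_card_eq (by omega))
      fun _ hS ↦ inclGraph.le_card_of_isResolving (by omega) (two_pow_pred_add_lt hn) hS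
  · intro hn
    have hn3 : 3 ≤ n := by omega
    exact metricDim_eq_of_exists_isResolving
      (inclGraph.exists_isResolving_card_eq_pred hn3 (by omega))
      fun _ hS ↦ inclGraph.le_card_of_isResolving hn3 (by rcases hn with rfl | rfl <;> norm_num) hS
end

section
/- Let G be the inclusion graph whose vertices are the nontrivial order ideals of P = C_1 × ⋯ × C_m (where each C_i is a finite chain of length n_i + 1, i.e., the ideal lattice of a principal ideal ring with n_i nontrivial ideals), with adjacency given by proper inclusion, m ≥ 2. Then for vertices I, J, the distance d(I,J) = 3 if and only if I and J both have every coordinate equal to the top or bottom of its chain, and J is the 'complement' of I (J_i is top iff I_i is bottom). -/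
open SimpleGraph Finset

variable {V : Type*}

/-! Remove `⊥` and `⊤` from a bounded lattice and join comparable elements. If `x ⊓ y ≠ ⊥`
(or `x ⊔ y ≠ ⊤`), that meet (join) is comparable to both `x` and `y`, so their distance is at
most `2`; conversely, if `x` and `y` are complements, no vertex is comparable to both of them.
Hence the distance exceeds `2` exactly for complements. In a product of chains the complements
are the `⊥`/`⊤`-tuples with complementary supports, and if `I i = ⊤` then, with `a` equal to
`1` at `i` and `⊥` elsewhere, `I ≥ a ≤ a ⊔ J ≥ J` is a path of length `3`. `chainGraph d` is
by definition this comparability graph for the product of the chains `Fin (d i + 2)`. -/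

namespace SimpleGraph

def properComparabilityGraph (α : Type*) [PartialOrder α] [BoundedOrder α] :
    SimpleGraph {x : α // x ≠ ⊥ ∧ x ≠ ⊤} where
  Adj x y := x.1 < y.1 ∨ y.1 < x.1
  symm := ⟨fun _ _ => Or.symm⟩
  loopless := ⟨fun _ h => h.elim (lt_irrefl _) (lt_irrefl _)⟩

namespace properComparabilityGraph

variable {α : Type*} [Lattice α] [BoundedOrder α] {x y : {x : α // x ≠ ⊥ ∧ x ≠ ⊤}}

lemma edist_le_one_of_le (h : x.1 ≤ y.1) : (properComparabilityGraph α).edist x y ≤ 1 := by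
  rw [edist_le_one_iff_adj_or_eq]
  rcases h.lt_or_eq with h | h
  · exact .inl (.inl h)
  · exact .inr (Subtype.ext h)

lemma edist_le_two_of_inf_ne_bot (h : x.1 ⊓ y.1 ≠ ⊥) :
    (properComparabilityGraph α).edist x y ≤ 2 := by
  let z : {x : α // x ≠ ⊥ ∧ x ≠ ⊤} := ⟨x.1 ⊓ y.1, h, ne_top_of_le_ne_top x.2.2 inf_le_left⟩
  calc _ ≤ (properComparabilityGraph α).edist x z + (properComparabilityGraph α).edist z y :=
        SimpleGraph.edist_triangle
    _ ≤ 1 + 1 := by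
      gcongr
      · rw [edist_comm]; exact edist_le_one_of_le (x := z) inf_le_left
      · exact edist_le_one_of_le (x := z) inf_le_right
    _ = 2 := one_add_one_eq_two

lemma edist_le_two_of_sup_ne_top (h : x.1 ⊔ y.1 ≠ ⊤) :
    (properComparabilityGraph α).edist x y ≤ 2 := by
  let z : {x : α // x ≠ ⊥ ∧ x ≠ ⊤} := ⟨x.1 ⊔ y.1, ne_bot_of_le_ne_bot x.2.1 le_sup_left, h⟩
  calc _ ≤ (properComparabilityGraph α).edist x z + (properComparabilityGraph α).edist z y :=
        SimpleGraph.edist_triangle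
    _ ≤ 1 + 1 := by
      gcongr
      · exact edist_le_one_of_le (y := z) le_sup_left
      · rw [edist_comm]; exact edist_le_one_of_le (y := z) le_sup_right
    _ = 2 := one_add_one_eq_two

theorem two_lt_edist_iff_isCompl :
    2 < (properComparabilityGraph α).edist x y ↔ IsCompl x.1 y.1 := by
  refine ⟨fun h ↦ ?_, fun h ↦ ?_⟩
  · rw [isCompl_iff, disjoint_iff, codisjoint_iff]
    constructor
    · by_contra hxy
      exact (edist_le_two_of_inf_ne_bot hxy).not_gt h
    · by_contra hxy
      exact (edist_le_two_of_sup_ne_top hxy).not_gt h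
  · have not_le : ¬ x.1 ≤ y.1 := fun hle ↦ x.2.1 (h.disjoint.eq_bot_of_le hle)
    have not_ge : ¬ y.1 ≤ x.1 := fun hle ↦ y.2.1 (h.symm.disjoint.eq_bot_of_le hle)
    refine two_lt_edist_iff.2 ⟨fun hxy ↦ not_le (hxy ▸ le_rfl), ?_, ?_⟩
    · rintro (hxy | hxy)
      exacts [not_le hxy.le, not_ge hxy.le]
    · refine Set.eq_empty_iff_forall_notMem.2 fun z hz ↦ ?_
      obtain ⟨hxz | hzx, hyz | hzy⟩ := (mem_commonNeighbors _).1 hz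
      · exact z.2.2 (top_le_iff.1 (h.sup_eq_top.ge.trans (sup_le hxz.le hyz.le)))
      · exact not_le (hxz.trans hzy).le
      · exact not_ge (hyz.trans hzx).le
      · exact z.2.1 (le_bot_iff.1 ((le_inf hzx.le hzy.le).trans h.inf_eq_bot.le))

lemma edist_le_three {a : α} (ha : a ≠ ⊥) (hax : a ≤ x.1) (hay : a ⊔ y.1 ≠ ⊤) :
    (properComparabilityGraph α).edist x y ≤ 3 := by
  let w : {x : α // x ≠ ⊥ ∧ x ≠ ⊤} := ⟨a, ha, ne_top_of_le_ne_top x.2.2 hax⟩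
  calc _ ≤ (properComparabilityGraph α).edist x w + (properComparabilityGraph α).edist w y :=
        SimpleGraph.edist_triangle
    _ ≤ 1 + 2 := by
      gcongr
      · rw [edist_comm]; exact edist_le_one_of_le (x := w) hax
      · exact edist_le_two_of_sup_ne_top (x := w) hay
    _ = 3 := by norm_num

end properComparabilityGraph

end SimpleGraph

lemma isCompl_iff_of_linearOrder {α : Type*} [LinearOrder α] [BoundedOrder α] [Nontrivial α]
    {a b : α} : IsCompl a b ↔ (a = ⊥ ∨ a = ⊤) ∧ (b = ⊥ ∨ b = ⊤) ∧ (b = ⊤ ↔ a = ⊥) := by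
  rw [isCompl_iff, disjoint_iff, codisjoint_iff, min_eq_bot, max_eq_top]
  have := (bot_ne_top : (⊥ : α) ≠ ⊤)
  grind

namespace chainGraph

variable {m : ℕ} {d : Fin m → ℕ}

lemma edist_le_three_of_isCompl (hd : ∀ i, 1 ≤ d i) {I J : ChainVert d} (h : IsCompl I.1 J.1) :
    (chainGraph d).edist I J ≤ 3 := by
  obtain ⟨i, hIi⟩ : ∃ i, I.1 i ≠ ⊥ := by
    by_contra! hI
    exact I.2.1 (funext hI)
  have hIJi : I.1 i = ⊤ ∧ J.1 i = ⊥ := by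
    grind [isCompl_iff_of_linearOrder.1 (Pi.isCompl_iff.1 h i)]
  have one_ne_top : (1 : Fin (d i + 2)) ≠ ⊤ := by
    rw [Fin.top_eq_last, ne_eq, Fin.ext_iff, Fin.val_one, Fin.val_last]
    have := hd i
    omega
  classical
  refine SimpleGraph.properComparabilityGraph.edist_le_three (a := Function.update ⊥ i 1)
    (fun ha ↦ ?_) ?_ (fun ha ↦ ?_)
  · simpa [bot_eq_zero] using congrFun ha i
  · exact update_le_iff.2 ⟨le_top.trans_eq hIJi.1.symm, fun _ _ ↦ bot_le⟩
  · apply one_ne_top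
    simpa [hIJi.2] using congrFun ha i

theorem dist_eq_three_iff_isCompl (hd : ∀ i, 1 ≤ d i) {I J : ChainVert d} :
    (chainGraph d).dist I J = 3 ↔ IsCompl I.1 J.1 := by
  have two_lt_iff : 2 < (chainGraph d).edist I J ↔ IsCompl I.1 J.1 :=
    SimpleGraph.properComparabilityGraph.two_lt_edist_iff_isCompl
  rw [SimpleGraph.dist, ENat.toNat_eq_iff three_ne_zero, ← two_lt_iff]
  refine ⟨fun h ↦ h ▸ by norm_num, fun h ↦ le_antisymm ?_ (Order.add_one_le_of_lt h)⟩
  exact edist_le_three_of_isCompl hd (two_lt_iff.1 h)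

end chainGraph

theorem stmt13_general (m : ℕ) (d : Fin m → ℕ) (hd : ∀ i, 1 ≤ d i)
    (I J : ChainVert d) :
    (chainGraph d).dist I J = 3 ↔
      ((∀ i, I.1 i = ⊥ ∨ I.1 i = ⊤) ∧ (∀ i, J.1 i = ⊥ ∨ J.1 i = ⊤) ∧
        ∀ i, (J.1 i = ⊤ ↔ I.1 i = ⊥)) := by
  rw [chainGraph.dist_eq_three_iff_isCompl hd, Pi.isCompl_iff]
  simp only [isCompl_iff_of_linearOrder, forall_and]

theorem stmt13 (m : ℕ) (hm : 2 ≤ m) (d : Fin m → ℕ) (hd : ∀ i, 1 ≤ d i)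
    (I J : ChainVert d) :
    (chainGraph d).dist I J = 3 ↔
      ((∀ i, I.1 i = ⊥ ∨ I.1 i = ⊤) ∧ (∀ i, J.1 i = ⊥ ∨ J.1 i = ⊤) ∧
        ∀ i, (J.1 i = ⊤ ↔ I.1 i = ⊥)) :=
  stmt13_general m d hd I J
end

section
/- Let R ≅ R_1 × F where R_1 is a principal ideal ring (not a field) with n_1 nontrivial ideals forming a chain and F is a field. Then the metric dimension of the inclusion ideal graph In(R) equals n_1. -/
open SimpleGraph Finset

variable {V : Type*}

/-!
Write `uₖ = (Iₖ, F)` for `0 ≤ k ≤ n` (with `I₀ = 0`). A vertex `w` sees these vertices through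
`k ↦ d(uₖ, w)`, a two-valued function that either singles out one `k`
(`w = (I_a, F)`, or `w = (R₁, 0)`, which is at distance 3 from `u₀` and 2 from the others) or is
the threshold `[a ≤ k]` (`w = (I_a, 0)`). Such a family of `m` tests separates at most `m + 1`
points: points avoiding every singled-out value are told apart by the number of thresholds below
them. So a resolving set has at least `n` vertices. Conversely `u₀, …, u_{n-1}` resolve:
`d(u₀, w) ≤ 1` exactly when `J = F`, and then `I` is located by the `0` in the distance vector,
otherwise by its first `1` and, at the top of the chain, by `d(u₀, w) = 3`.
-/

namespace SimpleGraph

variable {V : Type*} {G : SimpleGraph V} {u v w : V}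

lemma dist_eq_two_of_adj_of_adj (huv : u ≠ v) (hnadj : ¬G.Adj u v) (huw : G.Adj u w)
    (hwv : G.Adj w v) : G.dist u v = 2 := by
  have : G.edist u v = 2 := edist_eq_two_iff.mpr ⟨huv, hnadj, w, huw, hwv.symm⟩
  simp [SimpleGraph.dist, this]

lemma dist_eq_three_of_adj_of_adj_of_adj {a b : V} (huv : u ≠ v) (hnadj : ¬G.Adj u v)
    (hcommon : ∀ w, G.Adj u w → ¬G.Adj w v) (hua : G.Adj u a) (hab : G.Adj a b)
    (hbv : G.Adj b v) : G.dist u v = 3 := by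
  have hlt : 2 < G.edist u v := two_lt_edist_iff.mpr
    ⟨huv, hnadj, Set.eq_empty_of_forall_notMem fun w hw => hcommon w hw.1 hw.2.symm⟩
  have hle : G.edist u v ≤ 3 := (Walk.cons hua (.cons hab (.cons hbv .nil))).edist_le
  have : G.edist u v = 3 := le_antisymm hle (Order.add_one_le_of_lt hlt)
  simp [SimpleGraph.dist, this]

end SimpleGraph

lemma chainGraph_adj_iff {m : ℕ} {d : Fin m → ℕ} {x y : ChainVert d} :
    (chainGraph d).Adj x y ↔ x ≠ y ∧ (x.1 ≤ y.1 ∨ y.1 ≤ x.1) := by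
  change x.1 < y.1 ∨ y.1 < x.1 ↔ _
  rw [Ne, show x = y ↔ x.1 = y.1 from Subtype.ext_iff]
  constructor
  · rintro (h | h)
    exacts [⟨h.ne, .inl h.le⟩, ⟨h.ne', .inr h.le⟩]
  · rintro ⟨hne, h | h⟩
    exacts [.inl (h.lt_of_ne hne), .inr (h.lt_of_ne' hne)]

def pointOrCut : ℕ ⊕ ℕ → ℕ → Prop :=
  Sum.elim (fun a c => c = a) (fun a c => a ≤ c)

lemma card_le_card_add_one_of_pointOrCut_separates (T : Finset ℕ) (R : Finset (ℕ ⊕ ℕ))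
    (hsep : ∀ c ∈ T, ∀ c' ∈ T, (∀ r ∈ R, pointOrCut r c ↔ pointOrCut r c') → c = c') :
    #T ≤ #R + 1 := by
  classical
  set Q := T.filter (· ∉ R.toLeft)
  have hT : #T ≤ #Q + #R.toLeft := by
    refine (card_le_card fun c hc => ?_).trans (card_union_le Q R.toLeft)
    rw [mem_union, mem_filter]
    tauto
  -- off the points of `R`, a point `c` is determined by the number of cuts below it
  let cutsBelow (c : ℕ) : ℕ := #(R.toRight.filter (· ≤ c))
  have hmono : StrictMonoOn cutsBelow Q := by
    intro c hc c' hc' hlt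
    simp only [coe_filter, Set.mem_ofPred_eq, Q, mem_toLeft] at hc hc'
    obtain ⟨r, hr, hdiff⟩ : ∃ r ∈ R, ¬(pointOrCut r c ↔ pointOrCut r c') := by
      by_contra! h
      exact hlt.ne (hsep c hc.1 c' hc'.1 h)
    rcases r with a | a <;> simp only [pointOrCut, Sum.elim_inl, Sum.elim_inr] at hdiff
    · obtain rfl | rfl : a = c ∨ a = c' := by omega
      exacts [(hc.2 hr).elim, (hc'.2 hr).elim]
    · refine card_lt_card ((ssubset_iff_of_subset ?_).mpr ⟨a, ?_, ?_⟩)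
      · intro x hx
        simp only [mem_filter] at hx ⊢
        exact ⟨hx.1, hx.2.trans hlt.le⟩
      · simp only [mem_filter, mem_toRight]
        exact ⟨hr, by omega⟩
      · simp only [mem_filter]; omega
  have hQ : #Q ≤ #R.toRight + 1 := by
    simpa using card_le_card_of_injOn cutsBelow
      (t := range (#R.toRight + 1))
      (fun c _ => by simpa [Nat.lt_succ_iff] using card_filter_le _ _) hmono.injOn
  have := card_toLeft_add_card_toRight (u := R)
  omega

namespace ChainVert

variable {n : ℕ}

/- A vertex `(I, J)` of `In(R₁ × F)` has `col` the index of `I` in the chain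
`0 ⊊ I₁ ⊊ ⋯ ⊊ I_n ⊊ R₁` and `row` equal to `0` or `1` according as `J = 0` or `J = F`. -/
def col (x : ChainVert ![n, 0]) : ℕ := x.1 0

def row (x : ChainVert ![n, 0]) : ℕ := x.1 1

abbrev IsCoord (n j b : ℕ) : Prop :=
  j ≤ n + 1 ∧ b ≤ 1 ∧ ¬(j = 0 ∧ b = 0) ∧ ¬(j = n + 1 ∧ b = 1)

lemma coords_ext {v w : ∀ i : Fin 2, Fin (![n, 0] i + 2)} (h₀ : (v 0 : ℕ) = w 0)
    (h₁ : (v 1 : ℕ) = w 1) : v = w := by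
  funext i
  fin_cases i
  exacts [Fin.ext h₀, Fin.ext h₁]

lemma isCoord (x : ChainVert ![n, 0]) : IsCoord n x.col x.row := by
  have hcol : x.col < n + 2 := (x.1 0).isLt
  have hrow : x.row < 2 := (x.1 1).isLt
  refine ⟨by omega, by omega, fun ⟨h₀, h₁⟩ => x.2.1 (coords_ext ?_ ?_),
    fun ⟨h₀, h₁⟩ => x.2.2 (coords_ext ?_ ?_)⟩
  exacts [h₀, h₁, h₀, h₁]

lemma eq_iff_col_eq_and_row_eq {x y : ChainVert ![n, 0]} :
    x = y ↔ x.col = y.col ∧ x.row = y.row :=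
  ⟨fun h => h ▸ ⟨rfl, rfl⟩, fun ⟨h₀, h₁⟩ => Subtype.ext (coords_ext h₀ h₁)⟩

lemma le_iff {x y : ChainVert ![n, 0]} : x.1 ≤ y.1 ↔ x.col ≤ y.col ∧ x.row ≤ y.row := by
  simp only [Pi.le_def, Fin.forall_fin_two, Fin.le_def, col, row]

def mk (j b : ℕ) (h : IsCoord n j b) : ChainVert ![n, 0] :=
  ⟨Fin.cons ⟨j, by simp; omega⟩ (Fin.cons ⟨b, by simp; omega⟩ finZeroElim), by
    constructor <;> intro hv
    · exact h.2.2.1 ⟨congrArg Fin.val (congrFun hv 0), congrArg Fin.val (congrFun hv 1)⟩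
    · exact h.2.2.2 ⟨congrArg Fin.val (congrFun hv 0), congrArg Fin.val (congrFun hv 1)⟩⟩

@[simp] lemma col_mk {j b : ℕ} (h : IsCoord n j b) : (mk j b h).col = j := rfl

@[simp] lemma row_mk {j b : ℕ} (h : IsCoord n j b) : (mk j b h).row = b := rfl

lemma adj_iff {x y : ChainVert ![n, 0]} :
    (chainGraph ![n, 0]).Adj x y ↔ ¬(x.col = y.col ∧ x.row = y.row) ∧
      (x.col ≤ y.col ∧ x.row ≤ y.row ∨ y.col ≤ x.col ∧ y.row ≤ x.row) := by
  rw [chainGraph_adj_iff, ne_eq, eq_iff_col_eq_and_row_eq, le_iff, le_iff]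

def upper (c : ℕ) (hc : c ≤ n) : ChainVert ![n, 0] :=
  mk c 1 (by omega)

def upperDist (n c j b : ℕ) : ℕ :=
  if b = 1 then (if c = j then 0 else 1)
  else if j ≤ c then 1 else if j = n + 1 ∧ c = 0 then 3 else 2

lemma dist_upper (hn : 1 ≤ n) {c : ℕ} (hc : c ≤ n) (x : ChainVert ![n, 0]) :
    (chainGraph ![n, 0]).dist (upper c hc) x = upperDist n c x.col x.row := by
  have := x.isCoord
  have hne (h : ¬(c = x.col ∧ 1 = x.row)) : upper c hc ≠ x := by
    rwa [Ne, eq_iff_col_eq_and_row_eq]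
  have hnadj (h : x.row ≠ 1 ∧ c < x.col) : ¬(chainGraph ![n, 0]).Adj (upper c hc) x := by
    rw [adj_iff]; simp only [upper, col_mk, row_mk]; omega
  unfold upperDist
  split_ifs with hrow hcol
  · rw [show upper c hc = x from eq_iff_col_eq_and_row_eq.mpr ⟨hcol, hrow.symm⟩,
      SimpleGraph.dist_self]
  · exact SimpleGraph.dist_eq_one_iff_adj.mpr
      (adj_iff.mpr (by simp only [upper, col_mk, row_mk]; omega))
  · exact SimpleGraph.dist_eq_one_iff_adj.mpr
      (adj_iff.mpr (by simp only [upper, col_mk, row_mk]; omega))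
  · have hcommon (w) (h₁ : (chainGraph ![n, 0]).Adj (upper c hc) w)
        (h₂ : (chainGraph ![n, 0]).Adj w x) : False := by
      rw [adj_iff] at h₁ h₂
      simp only [upper, col_mk, row_mk] at h₁
      have := w.isCoord
      omega
    let a : ChainVert ![n, 0] := mk 1 1 (by omega)
    let b : ChainVert ![n, 0] := mk 1 0 (by omega)
    refine SimpleGraph.dist_eq_three_of_adj_of_adj_of_adj (a := a) (b := b)
      (hne (by omega)) (hnadj (by omega)) hcommon ?_ ?_ ?_
    all_goals (rw [adj_iff]; simp only [upper, a, b, col_mk, row_mk]; omega)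
  · by_cases hc0 : c = 0
    · refine SimpleGraph.dist_eq_two_of_adj_of_adj (hne (by omega)) (hnadj (by omega))
        (w := mk x.col 1 (by omega)) ?_ ?_ <;>
        (rw [adj_iff]; simp only [upper, col_mk, row_mk]; omega)
    · refine SimpleGraph.dist_eq_two_of_adj_of_adj (hne (by omega)) (hnadj (by omega))
        (w := mk c 0 (by omega)) ?_ ?_ <;>
        (rw [adj_iff]; simp only [upper, col_mk, row_mk]; omega)

def role (x : ChainVert ![n, 0]) : ℕ ⊕ ℕ :=
  if x.row = 1 then .inl x.col else if x.col = n + 1 then .inl 0 else .inr x.col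

lemma dist_upper_eq_iff (hn : 1 ≤ n) {c c' : ℕ} (hc : c ≤ n) (hc' : c' ≤ n)
    (x : ChainVert ![n, 0]) :
    (chainGraph ![n, 0]).dist (upper c hc) x = (chainGraph ![n, 0]).dist (upper c' hc') x ↔
      (pointOrCut x.role c ↔ pointOrCut x.role c') := by
  have := x.isCoord
  rw [dist_upper hn, dist_upper hn]
  unfold upperDist role
  split_ifs <;> simp only [pointOrCut, Sum.elim_inl, Sum.elim_inr, true_iff, false_iff] <;> omega

lemma le_card_of_isResolving (hn : 1 ≤ n) {S : Finset (ChainVert ![n, 0])}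
    (hS : IsResolving (chainGraph ![n, 0]) S) : n ≤ #S := by
  classical
  have hsep := card_le_card_add_one_of_pointOrCut_separates (range (n + 1)) (S.image role)
    fun c hc c' hc' h => by
      rw [mem_range, Nat.lt_succ_iff] at hc hc'
      have := hS (upper c hc) (upper c' hc') fun w hw =>
        (dist_upper_eq_iff hn hc hc' w).mpr (h _ (mem_image_of_mem _ hw))
      simpa [upper] using congrArg col this
  have := card_image_le (s := S) (f := role)
  rw [card_range] at hsep
  omega

lemma eq_of_upperDist_eq (hn : 1 ≤ n) {j b j' b' : ℕ} (hjb : IsCoord n j b)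
    (hjb' : IsCoord n j' b') (h : ∀ c < n, upperDist n c j b = upperDist n c j' b') :
    j = j' ∧ b = b' := by
  have h₀ := h 0 hn
  have h₁ := h (min (min j j') (n - 1)) (by omega)
  unfold upperDist at h₀ h₁
  split_ifs at h₀ h₁ <;> omega

def upperSet (n : ℕ) : Finset (ChainVert ![n, 0]) :=
  univ.map ⟨fun c : Fin n => upper c c.2.le, fun _ _ h => Fin.ext (congrArg col h)⟩

lemma card_upperSet : #(upperSet n) = n := by
  simp [upperSet]

lemma isResolving_upperSet (hn : 1 ≤ n) : IsResolving (chainGraph ![n, 0]) (upperSet n) := by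
  intro x y h
  have hdist (c : ℕ) (hc : c < n) : upperDist n c x.col x.row = upperDist n c y.col y.row := by
    rw [← dist_upper hn hc.le, ← dist_upper hn hc.le]
    have := h _ (by simpa [upperSet] using ⟨⟨c, hc⟩, rfl⟩)
    rwa [SimpleGraph.dist_comm, SimpleGraph.dist_comm (u := y)] at this
  exact eq_iff_col_eq_and_row_eq.mpr (eq_of_upperDist_eq hn x.isCoord y.isCoord hdist)

end ChainVert

theorem stmt15 (n₁ : ℕ) (h : 1 ≤ n₁) :
    metricDim (chainGraph ![n₁, 0]) = n₁ := by
  have hmem : n₁ ∈ {k | ∃ S : Finset (ChainVert ![n₁, 0]), #S = k ∧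
      IsResolving (chainGraph ![n₁, 0]) ↑S} :=
    ⟨_, ChainVert.card_upperSet, ChainVert.isResolving_upperSet h⟩
  refine le_antisymm (Nat.sInf_le hmem) (le_csInf ⟨n₁, hmem⟩ ?_)
  rintro k ⟨S, rfl, hS⟩
  exact ChainVert.le_card_of_isResolving h hS
end

section
/- Let R ≅ R_1 × ⋯ × R_m, m ≥ 2, each R_i a principal ideal non-field ring with n_i nontrivial ideals forming a chain. Then the independence number of the strong resolving graph of In(R) equals (n_1 + ⋯ + n_m) + m − 1. -/
open SimpleGraph Finset

variable {V : Type*}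

/-!
A vertex is a point of the box `∏ᵢ [0, dᵢ + 1]` other than its bottom and top; the tuples of `M`
are the corners of the box and `Jᶜ` is the mirror image `i ↦ dᵢ + 1 - Jᵢ`. In the inclusion
graph, comparable vertices are adjacent, a corner and its mirror image are at distance 3 (a
common neighbour would lie below their meet `⊥` or above their join `⊤`), and any other two
vertices have their meet or their join as a common neighbour. So an independent set of the strong
resolving graph is a `Compatible` family: its non-corners form a chain, and each corner is
comparable, up to mirroring, with every other member.

A maximal chain of the box has `∑ dᵢ + m - 1` interior points, and for `m ≥ 2` comparable
vertices are never mutually maximally distant.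

Conversely, cut the box at the chain `c₁ < ⋯ < cᵣ` of non-corners of a compatible family, with
`c₀ = ⊥` and `cᵣ₊₁ = ⊤`. Every corner of the family lies, up to mirroring, between two
consecutive cuts `z < z'`, and the corners there, read as their sets of full coordinates, form a
non-crossing family without complementary members. Oriented away from a suitable coordinate they
become a laminar family of nonempty subsets of a ground set `G` with `2 |G| ≤ ∑ᵢ (z'ᵢ - zᵢ)`,
so there are fewer than `2 |G|` of them. Adding up, the family has at most
`∑ᵢ (dᵢ + 1) - (r + 1) + r` members.
-/

open Relation

section SetFamilies

variable {α : Type*} [DecidableEq α]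

theorem card_add_one_le_two_mul_of_laminar (G : Finset α) (hG : G.Nonempty)
    (𝓛 : Finset (Finset α)) (hsub : ∀ X ∈ 𝓛, X.Nonempty ∧ X ⊆ G)
    (hlam : ∀ X ∈ 𝓛, ∀ Y ∈ 𝓛, X ⊆ Y ∨ Y ⊆ X ∨ Disjoint X Y) :
    #𝓛 + 1 ≤ 2 * #G := by
  induction G using Finset.strongInduction generalizing 𝓛 with
  | H G ih =>
  have hpred := pred_card_le_card_erase (s := 𝓛) (a := G)
  rcases (𝓛.erase G).eq_empty_or_nonempty with h0 | hne
  · have := hG.card_pos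
    rw [h0, card_empty] at hpred
    omega
  -- a largest member `X ≠ G` splits the others into those inside `X` and those outside it
  obtain ⟨X, hX, hmax⟩ := (𝓛.erase G).exists_max_image card hne
  obtain ⟨hXG, hX𝓛⟩ := mem_erase.1 hX
  obtain ⟨hXne, hXsub⟩ := hsub X hX𝓛
  have hlam' : ∀ (p : Finset α → Prop) [DecidablePred p], ∀ Y ∈ (𝓛.erase G).filter p,
      ∀ Z ∈ (𝓛.erase G).filter p, Y ⊆ Z ∨ Z ⊆ Y ∨ Disjoint Y Z := fun p _ Y hY Z hZ =>
    hlam Y (mem_of_mem_erase (mem_filter.1 hY).1) Z (mem_of_mem_erase (mem_filter.1 hZ).1)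
  have hin := ih X (Finset.ssubset_iff_subset_ne.2 ⟨hXsub, hXG⟩) hXne _
    (fun Y hY => ⟨(hsub Y (mem_of_mem_erase (mem_filter.1 hY).1)).1, (mem_filter.1 hY).2⟩)
    (hlam' (· ⊆ X))
  have hout := ih (G \ X) (sdiff_ssubset hXsub hXne)
    (sdiff_nonempty.2 fun h => hXG (Subset.antisymm hXsub h)) ((𝓛.erase G).filter (¬ · ⊆ X))
    (fun Y hY => by
      obtain ⟨hYe, hYX⟩ := mem_filter.1 hY
      have hY𝓛 := mem_of_mem_erase hYe
      refine ⟨(hsub Y hY𝓛).1, subset_sdiff.2 ⟨(hsub Y hY𝓛).2, ?_⟩⟩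
      rcases hlam Y hY𝓛 X hX𝓛 with h | h | h
      · exact absurd h hYX
      · exact absurd (eq_of_subset_of_card_le h (hmax Y hYe)).ge hYX
      · exact h)
    (hlam' (¬ · ⊆ X))
  have hsplit := card_filter_add_card_filter_not (s := 𝓛.erase G) (· ⊆ X)
  have hG' := card_sdiff_add_card_eq_card hXsub
  omega

variable [Fintype α]

def NonCrossing (X Y : Finset α) : Prop :=
  SymmGen (· ⊆ ·) X Y ∨ SymmGen (· ⊆ ·) X Yᶜ

lemma NonCrossing.compl_right {X Y : Finset α} (h : NonCrossing X Y) : NonCrossing X Yᶜ := by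
  rw [NonCrossing, compl_compl]
  exact h.symm

lemma NonCrossing.symm {X Y : Finset α} (h : NonCrossing X Y) : NonCrossing Y X := by
  simp only [NonCrossing, SymmGen] at h ⊢
  have h₁ : X ⊆ Yᶜ ↔ Y ⊆ Xᶜ := subset_compl_comm
  have h₂ : Yᶜ ⊆ X ↔ Xᶜ ⊆ Y := compl_le_iff_compl_le
  tauto

lemma NonCrossing.compl_left {X Y : Finset α} (h : NonCrossing X Y) : NonCrossing Xᶜ Y :=
  h.symm.compl_right.symm

lemma NonCrossing.laminar {X Y : Finset α} {p : α} (h : NonCrossing X Y) (hX : p ∉ X)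
    (hY : p ∉ Y) : X ⊆ Y ∨ Y ⊆ X ∨ Disjoint X Y := by
  rw [← subset_compl_iff_disjoint_right]
  rcases h with (h | h) | (h | h)
  · exact Or.inl h
  · exact Or.inr (Or.inl h)
  · exact Or.inr (Or.inr h)
  · exact absurd (h (mem_compl.2 hY)) hX

def orient (p : α) (X : Finset α) : Finset α := if p ∈ X then Xᶜ else X

lemma notMem_orient (p : α) (X : Finset α) : p ∉ orient p X := by
  unfold orient
  split_ifs with h <;> simp [h]

lemma orient_eq_or (p : α) (X : Finset α) : orient p X = X ∨ orient p X = Xᶜ := by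
  unfold orient
  split_ifs <;> simp

lemma NonCrossing.orient {X Y : Finset α} (h : NonCrossing X Y) (p : α) :
    NonCrossing (orient p X) (orient p Y) := by
  rcases orient_eq_or p X with hX | hX <;> rcases orient_eq_or p Y with hY | hY <;>
    simp only [hX, hY, h, h.compl_left, h.compl_right, h.compl_left.compl_right]

lemma orient_injOn {𝓕 : Finset (Finset α)} (hcompl : ∀ X ∈ 𝓕, Xᶜ ∉ 𝓕) (p : α) :
    Set.InjOn (orient p) 𝓕 := by
  intro X hX Y hY h
  rcases orient_eq_or p X with hX' | hX' <;> rcases orient_eq_or p Y with hY' | hY' <;>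
    rw [hX', hY'] at h
  · exact h
  · exact absurd (h ▸ hX) (compl_compl Y ▸ hcompl _ (by simpa using hY))
  · exact absurd (h ▸ hY) (compl_compl X ▸ hcompl _ (by simpa using hX))
  · exact compl_injective h

lemma orient_subset_of_notMem {p : α} {X L : Finset α} (h : X ⊆ L ∨ Xᶜ ⊆ L) (hp : p ∉ L) :
    orient p X ⊆ L := by
  have hpX := notMem_orient p X
  rcases orient_eq_or p X with hX | hX <;> rw [hX] at hpX ⊢ <;> rcases h with h | h
  · exact h
  · exact absurd (h (mem_compl.2 hpX)) hp
  · exact absurd (h (by simpa using hpX)) hp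
  · exact h

lemma orient_subset_or {p : α} {X L : Finset α} (h : X ⊆ L ∨ Xᶜ ⊆ L) :
    orient p X ⊆ L ∨ (orient p X)ᶜ ⊆ L := by
  rcases orient_eq_or p X with hX | hX <;> rw [hX]
  · exact h
  · rwa [compl_compl, or_comm]

lemma subset_orient_or {p : α} {X H : Finset α} (h : H ⊆ X ∨ H ⊆ Xᶜ) :
    H ⊆ orient p X ∨ H ⊆ (orient p X)ᶜ := by
  rcases orient_eq_or p X with hX | hX <;> rw [hX]
  · exact h
  · rwa [compl_compl, or_comm]

lemma orient_subset_compl_of_mem {p : α} {X H : Finset α} (h : H ⊆ X ∨ H ⊆ Xᶜ) (hp : p ∈ H) :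
    orient p X ⊆ Hᶜ := by
  rcases subset_orient_or (p := p) h with h | h
  · exact absurd (h hp) (notMem_orient p X)
  · exact subset_compl_comm.1 h

/-- Oriented away from `p`, the members of a non-crossing family pairwise nest or are disjoint,
and so do their traces on `G`. -/
theorem card_add_one_le_two_mul_of_nonCrossing (𝓕 : Finset (Finset α)) (h𝓕 : 𝓕.Nonempty)
    (hcross : ∀ X ∈ 𝓕, ∀ Y ∈ 𝓕, NonCrossing X Y) (hcompl : ∀ X ∈ 𝓕, Xᶜ ∉ 𝓕)
    (p : α) (G : Finset α) (hG : ∀ X ∈ 𝓕, (orient p X ∩ G).Nonempty)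
    (hinj : ∀ X ∈ 𝓕, ∀ Y ∈ 𝓕, orient p X ∩ G = orient p Y ∩ G → orient p X = orient p Y) :
    #𝓕 + 1 ≤ 2 * #G := by
  obtain ⟨X₀, hX₀⟩ := h𝓕
  have hcard : #(𝓕.image fun X => orient p X ∩ G) = #𝓕 :=
    card_image_of_injOn fun X hX Y hY h => orient_injOn hcompl p hX hY (hinj X hX Y hY h)
  rw [← hcard]
  refine card_add_one_le_two_mul_of_laminar G ((hG X₀ hX₀).mono inter_subset_right) _
    (forall_mem_image.2 fun X hX => ⟨hG X hX, inter_subset_right⟩)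
    (forall_mem_image.2 fun X hX => forall_mem_image.2 fun Y hY => ?_)
  rcases ((hcross X hX Y hY).orient p).laminar (notMem_orient p X) (notMem_orient p Y) with
    h | h | h
  · exact Or.inl (inter_subset_inter_right h)
  · exact Or.inr (Or.inl (inter_subset_inter_right h))
  · exact Or.inr (Or.inr (h.mono inter_subset_left inter_subset_left))

structure IsNonCrossingFamily (𝓕 : Finset (Finset α)) : Prop where
  nonempty : ∀ X ∈ 𝓕, X.Nonempty
  ne_univ : ∀ X ∈ 𝓕, X ≠ univ
  compl_notMem : ∀ X ∈ 𝓕, Xᶜ ∉ 𝓕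
  nonCrossing : ∀ X ∈ 𝓕, ∀ Y ∈ 𝓕, NonCrossing X Y

namespace IsNonCrossingFamily

variable {𝓕 : Finset (Finset α)}

lemma orient_nonempty (h : IsNonCrossingFamily 𝓕) {X : Finset α} (hX : X ∈ 𝓕) (p : α) :
    (orient p X).Nonempty := by
  rcases orient_eq_or p X with h' | h' <;> rw [h']
  · exact h.nonempty X hX
  · rw [nonempty_iff_ne_empty, ne_eq, compl_eq_empty_iff]
    exact h.ne_univ X hX

theorem card_add_one_le_two_mul_card_of_orient_subset (h : IsNonCrossingFamily 𝓕) (h𝓕 : 𝓕.Nonempty) (p : α)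
    (G : Finset α) (hG : ∀ X ∈ 𝓕, orient p X ⊆ G) : #𝓕 + 1 ≤ 2 * #G :=
  card_add_one_le_two_mul_of_nonCrossing 𝓕 h𝓕 h.nonCrossing h.compl_notMem p G
    (fun X hX => by rw [inter_eq_left.2 (hG X hX)]; exact h.orient_nonempty hX p)
    (fun X hX Y hY hXY => by rwa [inter_eq_left.2 (hG X hX), inter_eq_left.2 (hG Y hY)] at hXY)

theorem card_add_one_le_two_mul_card (h : IsNonCrossingFamily 𝓕) (h𝓕 : 𝓕.Nonempty)
    {L : Finset α} (hL : ∀ X ∈ 𝓕, X ⊆ L ∨ Xᶜ ⊆ L) : #𝓕 + 1 ≤ 2 * #L := by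
  by_cases hLu : L = univ
  · obtain ⟨X, hX⟩ := h𝓕
    obtain ⟨p, -⟩ := h.nonempty X hX
    exact h.card_add_one_le_two_mul_card_of_orient_subset ⟨X, hX⟩ p L fun _ _ => hLu ▸ subset_univ _
  · obtain ⟨p, hp⟩ : ∃ p, p ∉ L := by simpa [eq_univ_iff_forall] using hLu
    exact h.card_add_one_le_two_mul_card_of_orient_subset h𝓕 p L fun X hX =>
      orient_subset_of_notMem (hL X hX) hp

theorem card_add_one_le_two_mul_card_sdiff (h : IsNonCrossingFamily 𝓕) (h𝓕 : 𝓕.Nonempty)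
    {H L : Finset α} (hH : ∀ X ∈ 𝓕, H ⊆ X ∨ H ⊆ Xᶜ) (hL : ∀ X ∈ 𝓕, X ⊆ L ∨ Xᶜ ⊆ L)
    {p : α} (hp : p ∈ H) (hHL : H ⊆ L → L = univ) : #𝓕 + 1 ≤ 2 * #(L \ H) := by
  refine h.card_add_one_le_two_mul_card_of_orient_subset h𝓕 p _ fun X hX => ?_
  have hXH := orient_subset_compl_of_mem (hH X hX) hp
  rw [sdiff_eq_inter_compl]
  refine subset_inter ?_ hXH
  rcases orient_subset_or (p := p) (hL X hX) with hXL | hXL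
  · exact hXL
  · rw [hHL ((subset_compl_comm.1 hXH).trans hXL)]
    exact subset_univ _

theorem card_add_one_le_two_mul_card_insert_sdiff (h : IsNonCrossingFamily 𝓕)
    (h𝓕 : 𝓕.Nonempty) {H L : Finset α} (hH : ∀ X ∈ 𝓕, H ⊆ X ∨ H ⊆ Xᶜ)
    (hL : ∀ X ∈ 𝓕, X ⊆ L ∨ Xᶜ ⊆ L) {i₀ p : α} (hi₀ : i₀ ∈ H) (hp : p ∉ L) :
    #𝓕 + 1 ≤ 2 * #(insert i₀ (L \ H)) := by
  set G := insert i₀ (L \ H)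
  -- an oriented member lies in `L` and contains or avoids `H`, so its trace on `G` determines it
  have key : ∀ X ∈ 𝓕, ∀ i,
      i ∈ orient p X ↔ i ∈ orient p X ∩ G ∨ (i ∈ H ∧ i₀ ∈ orient p X ∩ G) := by
    intro X hX i
    have hXL := orient_subset_of_notMem (hL X hX) hp
    have hHX := subset_orient_or (p := p) (hH X hX)
    have hi₀G : i₀ ∈ G := mem_insert_self _ _
    constructor
    · intro hi
      by_cases hiH : i ∈ H
      · rcases hHX with hHX | hHX
        · exact Or.inr ⟨hiH, mem_inter.2 ⟨hHX hi₀, hi₀G⟩⟩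
        · exact absurd hi (mem_compl.1 (hHX hiH))
      · exact Or.inl (mem_inter.2 ⟨hi, mem_insert_of_mem (mem_sdiff.2 ⟨hXL hi, hiH⟩)⟩)
    · rintro (hi | ⟨hiH, hi₀X⟩)
      · exact (mem_inter.1 hi).1
      · rcases hHX with hHX | hHX
        · exact hHX hiH
        · exact absurd (mem_inter.1 hi₀X).1 (mem_compl.1 (hHX hi₀))
  refine card_add_one_le_two_mul_of_nonCrossing 𝓕 h𝓕 h.nonCrossing h.compl_notMem p G
    (fun X hX => ?_) (fun X hX Y hY hXY => ext fun i => by rw [key X hX, key Y hY, hXY])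
  obtain ⟨i, hi⟩ := h.orient_nonempty hX p
  rcases (key X hX i).1 hi with hi | ⟨-, hi₀⟩
  · exact ⟨i, hi⟩
  · exact ⟨i₀, hi₀⟩

end IsNonCrossingFamily

end SetFamilies

section Box

variable {ι : Type*} {d : ι → ℕ}

def IsBoxCorner (v : ∀ i, Fin (d i + 2)) : Prop := ∀ i, v i = 0 ∨ v i = Fin.last _

def mirror (v : ∀ i, Fin (d i + 2)) : ∀ i, Fin (d i + 2) := fun i => (v i).rev

def IsMirrorPair (u v : ∀ i, Fin (d i + 2)) : Prop := IsBoxCorner u ∧ v = mirror u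

/-- For distinct vertices of the inclusion graph, not being mutually maximally distant. -/
def Compatible (u v : ∀ i, Fin (d i + 2)) : Prop :=
  (¬IsBoxCorner u → ¬IsBoxCorner v → SymmGen (· ≤ ·) u v) ∧
    (IsBoxCorner v → (SymmGen (· ≤ ·) u v ∨ SymmGen (· ≤ ·) u (mirror v)) ∧ u ≠ mirror v)

@[simp] lemma mirror_apply (v : ∀ i, Fin (d i + 2)) (i : ι) : mirror v i = (v i).rev := rfl

@[simp] lemma mirror_mirror (v : ∀ i, Fin (d i + 2)) : mirror (mirror v) = v :=
  funext fun _ => Fin.rev_rev _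

lemma le_mirror_comm {u v : ∀ i, Fin (d i + 2)} : u ≤ mirror v ↔ v ≤ mirror u :=
  forall_congr' fun _ => Fin.le_rev_iff

lemma mirror_le_comm {u v : ∀ i, Fin (d i + 2)} : mirror u ≤ v ↔ mirror v ≤ u :=
  forall_congr' fun _ => Fin.rev_le_iff

lemma isBoxCorner_mirror {v : ∀ i, Fin (d i + 2)} (hv : IsBoxCorner v) :
    IsBoxCorner (mirror v) := by
  intro i
  rcases hv i with h | h <;> simp [h]

lemma isMirrorPair_of_inf_eq_bot_of_sup_eq_top {u v : ∀ i, Fin (d i + 2)} (hinf : u ⊓ v = ⊥)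
    (hsup : u ⊔ v = ⊤) : IsMirrorPair u v := by
  have key : ∀ i, (u i = 0 ∧ v i = Fin.last _) ∨ (u i = Fin.last _ ∧ v i = 0) := by
    intro i
    have h₁ : min (u i) (v i) = 0 := congrFun hinf i
    have h₂ : max (u i) (v i) = Fin.last _ := congrFun hsup i
    rcases le_total (u i) (v i) with h | h
    · exact Or.inl ⟨(min_eq_left h).symm.trans h₁, (max_eq_right h).symm.trans h₂⟩
    · exact Or.inr ⟨(max_eq_left h).symm.trans h₂, (min_eq_right h).symm.trans h₁⟩
  refine ⟨fun i => (key i).imp And.left And.left, funext fun i => ?_⟩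
  rcases key i with ⟨hu, hv⟩ | ⟨hu, hv⟩ <;> simp [hu, hv]

lemma exists_ne_coord_of_lt [Nontrivial ι] {u v : ∀ i, Fin (d i + 2)} (hu : u ≠ ⊥)
    (h : u < v) : (∃ k j, k ≠ j ∧ u k ≠ 0 ∧ u j < v j) ∨
      (∃ k j, k ≠ j ∧ v k ≠ Fin.last _ ∧ u j < v j) := by
  obtain ⟨-, b, hb⟩ := Pi.lt_def.1 h
  obtain ⟨a, hab⟩ := exists_ne b
  by_contra! hcon
  obtain ⟨h₁, h₂⟩ := hcon
  have hv : v a = Fin.last _ := by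
    by_contra hva
    exact absurd hb (not_lt.2 (h₂ a b hab hva))
  have hu' : u a = 0 := by
    by_contra hua
    exact absurd hb (not_lt.2 (h₁ a b hab hua))
  refine hu (funext fun k => ?_)
  by_contra huk
  have hka : k ≠ a := fun hk => huk (hk ▸ hu')
  exact absurd (h₁ k a hka huk) (not_le.2 (hu' ▸ hv ▸ Fin.pos_iff_ne_zero.2 (by simp)))

lemma isBoxCorner_and_le_of_not_above {S : Finset (∀ i, Fin (d i + 2))}
    (hcompat : (S : Set (∀ i, Fin (d i + 2))).Pairwise Compatible) {c v : ∀ i, Fin (d i + 2)}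
    (hcS : c ∈ S) (hcn : ¬IsBoxCorner c) (hmin : ∀ u ∈ S, ¬IsBoxCorner u → ¬u < c)
    (hvS : v ∈ S) (hvc : v ≠ c) (hv : ¬(c < v ∨ (IsBoxCorner v ∧ c ≤ mirror v))) :
    IsBoxCorner v ∧ (v ≤ c ∨ mirror v ≤ c) := by
  simp only [not_or, not_and] at hv
  have hvcorner : IsBoxCorner v := by
    by_contra hvn
    rcases (hcompat hvS hcS hvc).1 hvn hcn with h | h
    · exact hmin v hvS hvn (lt_of_le_of_ne h hvc)
    · exact hv.1 (lt_of_le_of_ne h hvc.symm)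
  refine ⟨hvcorner, ?_⟩
  rcases ((hcompat hcS hvS hvc.symm).2 hvcorner).1 with (h | h) | (h | h)
  · exact absurd (lt_of_le_of_ne h hvc.symm) hv.1
  · exact Or.inl h
  · exact absurd h (hv.2 hvcorner)
  · exact Or.inr h

namespace IsBoxCorner

variable {u : ∀ i, Fin (d i + 2)}

lemma inf_mirror (hu : IsBoxCorner u) : u ⊓ mirror u = ⊥ :=
  funext fun i => by rcases hu i with h | h <;> simp [h, bot_eq_zero]

lemma sup_mirror (hu : IsBoxCorner u) : u ⊔ mirror u = ⊤ :=
  funext fun i => by rcases hu i with h | h <;> simp [h, Fin.top_eq_last]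

lemma not_symmGen_mirror (hu : IsBoxCorner u) (hb : u ≠ ⊥) (ht : u ≠ ⊤) :
    ¬SymmGen (· ≤ ·) u (mirror u) := by
  rintro (h | h)
  · exact hb (hu.inf_mirror ▸ (inf_eq_left.2 h).symm)
  · exact ht (hu.sup_mirror ▸ (sup_eq_left.2 h).symm)

end IsBoxCorner

variable [Fintype ι]

def coordSum (v : ∀ i, Fin (d i + 2)) : ℕ := ∑ i, (v i : ℕ)

def topCoords (v : ∀ i, Fin (d i + 2)) : Finset ι := univ.filter fun i => v i = Fin.last _

def posCoords (v : ∀ i, Fin (d i + 2)) : Finset ι := univ.filter fun i => v i ≠ 0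

@[simp] lemma mem_topCoords {v : ∀ i, Fin (d i + 2)} {i : ι} :
    i ∈ topCoords v ↔ v i = Fin.last _ := by
  simp [topCoords]

@[simp] lemma mem_posCoords {v : ∀ i, Fin (d i + 2)} {i : ι} : i ∈ posCoords v ↔ v i ≠ 0 := by
  simp [posCoords]

@[simp] lemma posCoords_bot : posCoords (⊥ : ∀ i, Fin (d i + 2)) = ∅ := by
  simp [posCoords, bot_eq_zero]

lemma topCoords_eq_univ {v : ∀ i, Fin (d i + 2)} : topCoords v = univ ↔ v = ⊤ := by
  simp [eq_univ_iff_forall, funext_iff, Fin.top_eq_last]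

@[simp] lemma coordSum_bot : coordSum (⊥ : ∀ i, Fin (d i + 2)) = 0 := by
  simp [coordSum, bot_eq_zero]

lemma coordSum_top : coordSum (⊤ : ∀ i, Fin (d i + 2)) = ∑ i, d i + Fintype.card ι := by
  simp [coordSum, Fin.top_eq_last, sum_add_distrib]

lemma coordSum_lt_coordSum {u v : ∀ i, Fin (d i + 2)} (h : u < v) : coordSum u < coordSum v := by
  obtain ⟨hle, i, hi⟩ := Pi.lt_def.1 h
  exact sum_lt_sum (fun j _ => hle j) ⟨i, mem_univ _, hi⟩

namespace IsBoxCorner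

variable {u v w : ∀ i, Fin (d i + 2)}

lemma le_iff (hu : IsBoxCorner u) : u ≤ w ↔ topCoords u ⊆ topCoords w := by
  refine ⟨fun h i hi => ?_, fun h i => ?_⟩
  · rw [mem_topCoords] at hi ⊢
    exact Fin.last_le_iff.1 (hi ▸ h i)
  · rcases hu i with hi | hi
    · exact hi ▸ Fin.zero_le _
    · rw [hi, mem_topCoords.1 (h (mem_topCoords.2 hi))]

lemma ge_iff (hu : IsBoxCorner u) : w ≤ u ↔ posCoords w ⊆ topCoords u := by
  refine ⟨fun h i hi => ?_, fun h i => ?_⟩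
  · rw [mem_posCoords] at hi
    rw [mem_topCoords]
    refine (hu i).resolve_left fun hu0 => hi ?_
    simpa [hu0] using h i
  · by_cases hi : w i = 0
    · exact hi ▸ Fin.zero_le _
    · rw [mem_topCoords.1 (h (mem_posCoords.2 hi))]
      exact Fin.le_last _

lemma eq_of_topCoords_eq (hu : IsBoxCorner u) (hv : IsBoxCorner v)
    (h : topCoords u = topCoords v) : u = v :=
  le_antisymm (hu.le_iff.2 h.le) (hv.le_iff.2 h.ge)

lemma topCoords_nonempty (hu : IsBoxCorner u) (h : u ≠ ⊥) : (topCoords u).Nonempty := by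
  obtain ⟨i, hi⟩ := Function.ne_iff.1 h
  exact ⟨i, mem_topCoords.2 ((hu i).resolve_left (by simpa [bot_eq_zero] using hi))⟩

variable [DecidableEq ι]

lemma topCoords_mirror (hu : IsBoxCorner u) : topCoords (mirror u) = (topCoords u)ᶜ := by
  ext i
  rcases hu i with h | h <;> simp [h]

lemma ne_mirror_self (hu : IsBoxCorner u) (h : u ≠ ⊥) : u ≠ mirror u := by
  obtain ⟨i, hi⟩ := hu.topCoords_nonempty h
  intro he
  have := hu.topCoords_mirror ▸ he ▸ hi
  simp [hi] at this

lemma le_or_le_mirror_iff (hv : IsBoxCorner v) :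
    w ≤ v ∨ w ≤ mirror v ↔ posCoords w ⊆ topCoords v ∨ posCoords w ⊆ (topCoords v)ᶜ := by
  rw [← hv.topCoords_mirror, ← hv.ge_iff, ← (isBoxCorner_mirror hv).ge_iff]

lemma le_or_mirror_le_iff (hv : IsBoxCorner v) :
    v ≤ w ∨ mirror v ≤ w ↔ topCoords v ⊆ topCoords w ∨ (topCoords v)ᶜ ⊆ topCoords w := by
  rw [← hv.topCoords_mirror, ← hv.le_iff, ← (isBoxCorner_mirror hv).le_iff]

lemma nonCrossing_topCoords (hu : IsBoxCorner u) (hv : IsBoxCorner v)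
    (h : SymmGen (· ≤ ·) u v ∨ SymmGen (· ≤ ·) u (mirror v)) :
    NonCrossing (topCoords u) (topCoords v) := by
  rw [NonCrossing, ← hv.topCoords_mirror]
  simp only [SymmGen] at h ⊢
  rwa [← hu.le_iff, ← hv.le_iff, ← hu.le_iff, ← (isBoxCorner_mirror hv).le_iff]

end IsBoxCorner

variable [DecidableEq ι]

lemma coordSum_add_le_coordSum {z z' : ∀ i, Fin (d i + 2)} (h : z ≤ z') {G E : Finset ι}
    (hGE : Disjoint G E) (hG : ∀ i ∈ G, (z i : ℕ) + 2 ≤ z' i)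
    (hE : ∀ i ∈ E, (z i : ℕ) + 1 ≤ z' i) : coordSum z + 2 * #G + #E ≤ coordSum z' := by
  have hsplit : ∑ i, ((z' i : ℕ) - z i) + coordSum z = coordSum z' := by
    rw [coordSum, coordSum, ← sum_add_distrib]
    exact sum_congr rfl fun i _ => Nat.sub_add_cancel (h i)
  have hgain : 2 * #G + #E ≤ ∑ i, ((z' i : ℕ) - z i) := calc
    2 * #G + #E = ∑ _ ∈ G, 2 + ∑ _ ∈ E, 1 := by simp [mul_comm]
    _ ≤ ∑ i ∈ G, ((z' i : ℕ) - z i) + ∑ i ∈ E, ((z' i : ℕ) - z i) :=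
      add_le_add (sum_le_sum fun i hi => by have := hG i hi; omega)
        (sum_le_sum fun i hi => by have := hE i hi; omega)
    _ = ∑ i ∈ G ∪ E, ((z' i : ℕ) - z i) := (sum_union hGE).symm
    _ ≤ ∑ i, ((z' i : ℕ) - z i) := sum_le_sum_of_subset (subset_univ _)
  omega

lemma add_two_le_of_mem_sdiff (hd : ∀ i, 1 ≤ d i) {z z' : ∀ i, Fin (d i + 2)} {i : ι}
    (hi : i ∈ topCoords z' \ posCoords z) : (z i : ℕ) + 2 ≤ z' i := by
  simp only [mem_sdiff, mem_topCoords, mem_posCoords, not_not] at hi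
  rw [hi.1, hi.2, Fin.val_last, Fin.val_zero]
  have := hd i
  omega

lemma coordSum_add_two_mul_card_sdiff_le (hd : ∀ i, 1 ≤ d i) {z z' : ∀ i, Fin (d i + 2)}
    (h : z ≤ z') : coordSum z + 2 * #(topCoords z' \ posCoords z) ≤ coordSum z' := by
  simpa using coordSum_add_le_coordSum h (disjoint_empty_right _)
    (fun _ hi => add_two_le_of_mem_sdiff hd hi) (by simp)

lemma coordSum_add_two_mul_card_insert_sdiff_le (hd : ∀ i, 1 ≤ d i)
    {z z' : ∀ i, Fin (d i + 2)} (h : z ≤ z') (hzz' : posCoords z ⊆ topCoords z') {i₀ i₁ : ι}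
    (hi₀ : z i₀ ≠ 0 ∧ z i₀ ≠ Fin.last _) (hi₁ : z' i₁ ≠ 0 ∧ z' i₁ ≠ Fin.last _) :
    coordSum z + 2 * #(insert i₀ (topCoords z' \ posCoords z)) ≤ coordSum z' := by
  have hi₀' : i₀ ∈ topCoords z' := hzz' (mem_posCoords.2 hi₀.1)
  have hi₁' : i₁ ∉ topCoords z' := by simpa using hi₁.2
  have hgain := coordSum_add_le_coordSum h (E := {i₀, i₁}) ?_
    (fun _ hi => add_two_le_of_mem_sdiff hd hi) ?_
  · have h₁ := card_insert_le i₀ (topCoords z' \ posCoords z)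
    have h₂ : #({i₀, i₁} : Finset ι) = 2 := card_pair fun h => hi₁' (h ▸ hi₀')
    omega
  · simp [hi₀.1, hi₁']
  · simp only [mem_insert, mem_singleton, forall_eq_or_imp, forall_eq]
    constructor
    · rw [mem_topCoords.1 hi₀', Fin.val_last]
      have := Fin.val_lt_last hi₀.2
      omega
    · rw [show z i₁ = 0 by simpa using mt (@hzz' i₁) hi₁', Fin.val_zero]
      have := Fin.pos_iff_ne_zero.2 hi₁.1
      omega

end Box

section UpperBound

variable {ι : Type*} [Fintype ι] [DecidableEq ι] {d : ι → ℕ}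

theorem isNonCrossingFamily_image_topCoords {F : Finset (∀ i, Fin (d i + 2))}
    (hF : ∀ v ∈ F, IsBoxCorner v ∧ v ≠ ⊥ ∧ v ≠ ⊤)
    (hcompat : (F : Set (∀ i, Fin (d i + 2))).Pairwise Compatible) :
    IsNonCrossingFamily (F.image topCoords) where
  nonempty := forall_mem_image.2 fun v hv => (hF v hv).1.topCoords_nonempty (hF v hv).2.1
  ne_univ := forall_mem_image.2 fun v hv => topCoords_eq_univ.not.2 (hF v hv).2.2
  compl_notMem := forall_mem_image.2 fun u hu hmem => by
    obtain ⟨v, hv, hvu⟩ := mem_image.1 hmem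
    have hu' := (hF u hu).1
    rw [← hu'.topCoords_mirror] at hvu
    have hv' := (hF v hv).1.eq_of_topCoords_eq (isBoxCorner_mirror hu') hvu
    by_cases huv : u = v
    · exact hu'.ne_mirror_self (hF u hu).2.1 (huv.trans hv')
    · exact ((hcompat hv hu (Ne.symm huv)).2 hu').2 hv'
  nonCrossing := forall_mem_image.2 fun u hu => forall_mem_image.2 fun v hv => by
    by_cases huv : u = v
    · subst huv
      exact Or.inl (Or.inl subset_rfl)
    · exact (hF u hu).1.nonCrossing_topCoords (hF v hv).1 ((hcompat hu hv huv).2 (hF v hv).1).1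

theorem coordSum_add_card_lt_coordSum_of_corners (hd : ∀ i, 1 ≤ d i)
    {z z' : ∀ i, Fin (d i + 2)} (hzz' : z < z') (hz : z = ⊥ ∨ ¬IsBoxCorner z)
    (hz' : z' = ⊤ ∨ ¬IsBoxCorner z') {F : Finset (∀ i, Fin (d i + 2))}
    (hF : ∀ v ∈ F, IsBoxCorner v ∧ v ≠ ⊥ ∧ v ≠ ⊤)
    (hcompat : (F : Set (∀ i, Fin (d i + 2))).Pairwise Compatible)
    (hlow : ∀ v ∈ F, z ≤ v ∨ z ≤ mirror v) (hup : ∀ v ∈ F, v ≤ z' ∨ mirror v ≤ z') :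
    coordSum z + #F < coordSum z' := by
  rcases F.eq_empty_or_nonempty with rfl | hFne
  · simpa using coordSum_lt_coordSum hzz'
  have h𝓕 := isNonCrossingFamily_image_topCoords hF hcompat
  have hne := hFne.image topCoords
  have hH : ∀ X ∈ F.image topCoords, posCoords z ⊆ X ∨ posCoords z ⊆ Xᶜ :=
    forall_mem_image.2 fun v hv => (hF v hv).1.le_or_le_mirror_iff.1 (hlow v hv)
  have hL : ∀ X ∈ F.image topCoords, X ⊆ topCoords z' ∨ Xᶜ ⊆ topCoords z' :=
    forall_mem_image.2 fun v hv => (hF v hv).1.le_or_mirror_le_iff.1 (hup v hv)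
  rw [← card_image_of_injOn fun u hu v hv => (hF u hu).1.eq_of_topCoords_eq (hF v hv).1]
  have hsdiff := coordSum_add_two_mul_card_sdiff_le hd hzz'.le
  rcases hz with rfl | hz
  · have := h𝓕.card_add_one_le_two_mul_card hne hL
    simp only [posCoords_bot, sdiff_empty, coordSum_bot] at hsdiff ⊢
    omega
  obtain ⟨i₀, hi₀⟩ : ∃ i, z i ≠ 0 ∧ z i ≠ Fin.last _ := by simpa [IsBoxCorner, not_or] using hz
  -- orient the corners away from `i₀`, or from a coordinate at which `z'` is not extreme
  by_cases hzz'' : posCoords z ⊆ topCoords z' ∧ z' ≠ ⊤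
  · obtain ⟨i₁, hi₁⟩ : ∃ i, z' i ≠ 0 ∧ z' i ≠ Fin.last _ := by
      simpa [IsBoxCorner, not_or] using hz'.resolve_left hzz''.2
    have := h𝓕.card_add_one_le_two_mul_card_insert_sdiff hne hH hL (mem_posCoords.2 hi₀.1)
      (p := i₁) (by simpa using hi₁.2)
    have := coordSum_add_two_mul_card_insert_sdiff_le hd hzz'.le hzz''.1 hi₀ hi₁
    omega
  · have := h𝓕.card_add_one_le_two_mul_card_sdiff hne hH hL (mem_posCoords.2 hi₀.1) fun h =>
      topCoords_eq_univ.2 (not_and_not_right.1 hzz'' h)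
    omega

/-- Cutting at the least non-corner `c`: the corners that do not lie above `c`, up to mirroring,
lie between `z` and `c`, and everything else lies above `c`. -/
theorem coordSum_add_card_lt_coordSum_top (hd : ∀ i, 1 ≤ d i) (S : Finset (∀ i, Fin (d i + 2)))
    (z : ∀ i, Fin (d i + 2)) (hz : z = ⊥ ∨ ¬IsBoxCorner z) (hzt : z ≠ ⊤)
    (hS : ∀ v ∈ S, v ≠ ⊥ ∧ v ≠ ⊤) (hcompat : (S : Set (∀ i, Fin (d i + 2))).Pairwise Compatible)
    (habove : ∀ v ∈ S, z < v ∨ (IsBoxCorner v ∧ z ≤ mirror v)) :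
    coordSum z + #S < coordSum (⊤ : ∀ i, Fin (d i + 2)) := by
  induction S using Finset.strongInduction generalizing z with
  | H S ih =>
  classical
  have hlow : ∀ v ∈ S, z ≤ v ∨ z ≤ mirror v := fun v hv =>
    (habove v hv).imp le_of_lt And.right
  by_cases hall : ∀ v ∈ S, IsBoxCorner v
  · exact coordSum_add_card_lt_coordSum_of_corners hd (lt_top_iff_ne_top.2 hzt) hz (Or.inl rfl)
      (fun v hv => ⟨hall v hv, hS v hv⟩) hcompat hlow fun v _ => Or.inl le_top
  obtain ⟨c, hc⟩ := exists_minimal (s := S.filter (¬IsBoxCorner ·)) <| by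
    obtain ⟨v, hv, hv'⟩ : ∃ v ∈ S, ¬IsBoxCorner v := by simpa using hall
    exact ⟨v, mem_filter.2 ⟨hv, hv'⟩⟩
  obtain ⟨hcS, hcn⟩ := mem_filter.1 hc.1
  have hmin : ∀ u ∈ S, ¬IsBoxCorner u → ¬u < c := fun u hu hun =>
    hc.not_lt (mem_filter.2 ⟨hu, hun⟩)
  set P := fun v => c < v ∨ (IsBoxCorner v ∧ c ≤ mirror v)
  set S' := (S.erase c).filter P
  set F := (S.erase c).filter (¬P ·)
  have hsplit : #S' + #F + 1 = #S := by
    rw [card_filter_add_card_filter_not, card_erase_add_one hcS]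
  have hS'S : S' ⊂ S := (filter_subset _ _).trans_ssubset (erase_ssubset hcS)
  have hFS : F ⊆ S := (filter_subset _ _).trans (erase_subset _ _)
  have hFc : ∀ v ∈ F, IsBoxCorner v ∧ (v ≤ c ∨ mirror v ≤ c) := fun v hv => by
    obtain ⟨hv, hvP⟩ := mem_filter.1 hv
    exact isBoxCorner_and_le_of_not_above hcompat hcS hcn hmin (mem_of_mem_erase hv)
      (ne_of_mem_erase hv) hvP
  have hzc : z < c := (habove c hcS).resolve_right fun h => hcn h.1
  have hlower := coordSum_add_card_lt_coordSum_of_corners hd hzc hz (Or.inr hcn)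
    (fun v hv => ⟨(hFc v hv).1, hS v (hFS hv)⟩) (hcompat.mono (coe_subset.2 hFS))
    (fun v hv => hlow v (hFS hv)) fun v hv => (hFc v hv).2
  have hupper := ih S' hS'S c (Or.inr hcn) (fun h => hcn (h ▸ fun _ => Or.inr rfl))
    (fun v hv => hS v (hS'S.subset hv)) (hcompat.mono (coe_subset.2 hS'S.subset))
    fun v hv => (mem_filter.1 hv).2
  omega

end UpperBound

section Chain

variable {ι : Type*} [Fintype ι] [DecidableEq ι] {d : ι → ℕ}

noncomputable def bump (v : ∀ i, Fin (d i + 2)) : ∀ i, Fin (d i + 2) :=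
  if h : ∃ i, v i ≠ Fin.last _ then Function.update v h.choose (v h.choose + 1) else v

lemma le_bump (v : ∀ i, Fin (d i + 2)) : v ≤ bump v := by
  unfold bump
  split_ifs with h
  · refine le_update_iff.2 ⟨?_, fun _ _ => le_rfl⟩
    rw [Fin.le_iff_val_le_val, Fin.val_add_one_of_lt (Fin.lt_last_iff_ne_last.2 h.choose_spec)]
    exact Nat.le_succ _
  · exact le_rfl

lemma coordSum_bump {v : ∀ i, Fin (d i + 2)} (hv : v ≠ ⊤) :
    coordSum (bump v) = coordSum v + 1 := by
  have h : ∃ i, v i ≠ Fin.last _ := by simpa [funext_iff, Fin.top_eq_last] using hv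
  set i := h.choose
  have hi : v i < Fin.last _ := Fin.lt_last_iff_ne_last.2 h.choose_spec
  have hrest : ∑ j ∈ univ.erase i, (Function.update v i (v i + 1) j : ℕ) =
      ∑ j ∈ univ.erase i, (v j : ℕ) :=
    sum_congr rfl fun j hj => by rw [Function.update_of_ne (ne_of_mem_erase hj)]
  rw [bump, dif_pos h, coordSum, coordSum, ← add_sum_erase _ _ (mem_univ i),
    ← add_sum_erase _ _ (mem_univ i), hrest, Function.update_self, Fin.val_add_one_of_lt hi]
  ring

noncomputable def boxChain (n : ℕ) : ∀ i, Fin (d i + 2) := bump^[n] ⊥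

lemma monotone_boxChain : Monotone (boxChain (d := d)) :=
  monotone_nat_of_le_succ fun n => by
    simp only [boxChain, Function.iterate_succ_apply']
    exact le_bump _

lemma coordSum_boxChain {n : ℕ} (hn : n ≤ coordSum (⊤ : ∀ i, Fin (d i + 2))) :
    coordSum (boxChain (d := d) n) = n := by
  induction n with
  | zero => simp [boxChain]
  | succ n ih =>
    have hn' := ih (by omega)
    rw [boxChain, Function.iterate_succ_apply', ← boxChain,
      coordSum_bump fun h => by rw [h] at hn'; omega, hn']

theorem exists_isChain_card :
    ∃ T : Finset (∀ i, Fin (d i + 2)), #T = coordSum (⊤ : ∀ i, Fin (d i + 2)) - 1 ∧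
      (∀ v ∈ T, v ≠ ⊥ ∧ v ≠ ⊤) ∧ IsChain (· ≤ ·) (T : Set (∀ i, Fin (d i + 2))) := by
  set N := coordSum (⊤ : ∀ i, Fin (d i + 2))
  have hsum : ∀ n ∈ Icc 1 (N - 1), coordSum (boxChain (d := d) n) = n := fun n hn =>
    coordSum_boxChain (by have := (mem_Icc.1 hn).2; omega)
  refine ⟨(Icc 1 (N - 1)).image boxChain, ?_, forall_mem_image.2 fun n hn => ?_, ?_⟩
  · rw [card_image_of_injOn fun a ha b hb h => by
      rw [← hsum a ha, ← hsum b hb]; exact congrArg coordSum h]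
    simp
  · have h₁ := hsum n hn
    have h₂ := mem_Icc.1 hn
    refine ⟨fun h => ?_, fun h => ?_⟩
    · rw [h, coordSum_bot] at h₁
      omega
    · rw [h] at h₁
      omega
  · rw [coe_image]
    rintro _ ⟨a, -, rfl⟩ _ ⟨b, -, rfl⟩ -
    exact (le_total a b).imp (fun h => monotone_boxChain h) fun h => monotone_boxChain h

end Chain

section InclusionGraph

variable {m : ℕ} {d : Fin m → ℕ}

lemma chainGraph_adj_iff_s18 {I J : ChainVert d} :
    (chainGraph d).Adj I J ↔ I ≠ J ∧ SymmGen (· ≤ ·) I.1 J.1 := by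
  have hext : I = J ↔ I.1 = J.1 := ⟨congrArg _, fun h => Subtype.ext h⟩
  show I.1 < J.1 ∨ J.1 < I.1 ↔ _
  rw [Ne, hext]
  constructor
  · rintro (h | h)
    · exact ⟨h.ne, Or.inl h.le⟩
    · exact ⟨h.ne', Or.inr h.le⟩
  · rintro ⟨hne, h | h⟩
    · exact Or.inl (lt_of_le_of_ne h hne)
    · exact Or.inr (lt_of_le_of_ne h (Ne.symm hne))

lemma chainGraph_exists_adj_adj {I J : ChainVert d} (h : ¬SymmGen (· ≤ ·) I.1 J.1)
    (hpair : ¬IsMirrorPair I.1 J.1) : ∃ X, (chainGraph d).Adj I X ∧ (chainGraph d).Adj X J := by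
  simp only [SymmGen, not_or] at h
  by_cases hinf : I.1 ⊓ J.1 = ⊥
  · have hsup : I.1 ⊔ J.1 ≠ ⊤ := fun hsup =>
      hpair (isMirrorPair_of_inf_eq_bot_of_sup_eq_top hinf hsup)
    exact ⟨⟨I.1 ⊔ J.1, ne_bot_of_le_ne_bot I.2.1 le_sup_left, hsup⟩,
      Or.inl (left_lt_sup.2 h.2), Or.inr (right_lt_sup.2 h.1)⟩
  · exact ⟨⟨I.1 ⊓ J.1, hinf, ne_top_of_le_ne_top I.2.2 inf_le_left⟩,
      Or.inr (inf_lt_left.2 h.1), Or.inl (inf_lt_right.2 h.2)⟩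

lemma chainGraph_exists_adj_adj_adj_mirror (hd : ∀ i, 1 ≤ d i) {J Jc : ChainVert d}
    (hJ : IsBoxCorner J.1) (hJc : Jc.1 = mirror J.1) :
    ∃ W X, (chainGraph d).Adj J W ∧ (chainGraph d).Adj W X ∧ (chainGraph d).Adj X Jc := by
  obtain ⟨i, hi⟩ := hJ.topCoords_nonempty J.2.1
  obtain ⟨j, hj⟩ : ∃ j, J.1 j ≠ Fin.last _ := by simpa [funext_iff, Fin.top_eq_last] using J.2.2
  rw [mem_topCoords] at hi
  have hj0 : J.1 j = 0 := (hJ j).resolve_right hj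
  have hij : j ≠ i := fun h => hj (h ▸ hi)
  have : NeZero (d i) := ⟨Nat.one_le_iff_ne_zero.1 (hd i)⟩
  have h1 : (1 : Fin (d i + 2)) < Fin.last _ := Fin.one_lt_last
  set w := Function.update J.1 i 1
  set x := Function.update (⊤ : ∀ i, Fin (d i + 2)) i 1
  have hw_ne : ∀ v, v i = Fin.last _ → w ≠ v := fun v hv h =>
    h1.ne (by rw [← hv, ← h]; simp [w])
  refine ⟨⟨w, fun h => ?_, hw_ne ⊤ rfl⟩, ⟨x, fun h => ?_, fun h => ?_⟩, ?_, ?_, ?_⟩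
  · simpa [w, bot_eq_zero] using congrFun h i
  · simpa [x, bot_eq_zero] using congrFun h i
  · exact h1.ne ((by simp [x] : x i = 1).symm.trans (congrFun h i))
  · refine Or.inr (lt_of_le_of_ne (update_le_iff.2 ⟨hi ▸ h1.le, fun _ _ => le_rfl⟩) ?_)
    exact hw_ne _ hi
  · refine Or.inl (lt_of_le_of_ne (update_le_update_iff.2 ⟨le_rfl, fun _ _ => le_top⟩) ?_)
    intro h
    simpa [w, x, hij, hj0] using congrFun h j
  · refine Or.inr (lt_of_le_of_ne (le_update_iff.2 ⟨?_, fun _ _ => le_top⟩) fun h => ?_)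
    · simp [hJc, hi]
    · simpa [x, hJc, hi] using congrFun h i

lemma chainGraph_reachable_and_dist_le_two {I J : ChainVert d} (hpair : ¬IsMirrorPair I.1 J.1) :
    (chainGraph d).Reachable I J ∧ (chainGraph d).dist I J ≤ 2 := by
  by_cases hIJ : I = J
  · subst hIJ
    simp
  by_cases hc : SymmGen (· ≤ ·) I.1 J.1
  · have hadj := chainGraph_adj_iff_s18.2 ⟨hIJ, hc⟩
    exact ⟨hadj.reachable, (dist_eq_one_iff_adj.2 hadj).trans_le one_le_two⟩
  obtain ⟨X, h₁, h₂⟩ := chainGraph_exists_adj_adj hc hpair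
  exact ⟨(h₁.toWalk.append h₂.toWalk).reachable, dist_le (h₁.toWalk.append h₂.toWalk)⟩

lemma chainGraph_reachable_and_dist_le_three_of_mirror (hd : ∀ i, 1 ≤ d i) {J Jc : ChainVert d}
    (hJ : IsBoxCorner J.1) (hJc : Jc.1 = mirror J.1) :
    (chainGraph d).Reachable J Jc ∧ (chainGraph d).dist J Jc ≤ 3 := by
  obtain ⟨W, X, h₁, h₂, h₃⟩ := chainGraph_exists_adj_adj_adj_mirror hd hJ hJc
  let p := Walk.cons h₁ (Walk.cons h₂ h₃.toWalk)
  exact ⟨p.reachable, dist_le p⟩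

lemma chainGraph_preconnected (hd : ∀ i, 1 ≤ d i) : (chainGraph d).Preconnected := fun I J => by
  by_cases hpair : IsMirrorPair I.1 J.1
  · exact (chainGraph_reachable_and_dist_le_three_of_mirror hd hpair.1 hpair.2).1
  · exact (chainGraph_reachable_and_dist_le_two hpair).1

lemma chainGraph_dist_le_three (hd : ∀ i, 1 ≤ d i) (I J : ChainVert d) :
    (chainGraph d).dist I J ≤ 3 := by
  by_cases hpair : IsMirrorPair I.1 J.1
  · exact (chainGraph_reachable_and_dist_le_three_of_mirror hd hpair.1 hpair.2).2
  · exact (chainGraph_reachable_and_dist_le_two hpair).2.trans (by norm_num)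

lemma two_le_chainGraph_dist (hd : ∀ i, 1 ≤ d i) {I J : ChainVert d}
    (h : ¬SymmGen (· ≤ ·) I.1 J.1) : 2 ≤ (chainGraph d).dist I J := by
  have hne : I ≠ J := by
    rintro rfl
    exact h SymmGen.rfl
  have h₀ := (chainGraph_preconnected hd I J).pos_dist_of_ne hne
  have h₁ : (chainGraph d).dist I J ≠ 1 := fun h₁ =>
    h (chainGraph_adj_iff_s18.1 (dist_eq_one_iff_adj.1 h₁)).2
  omega

lemma chainGraph_dist_mirror (hd : ∀ i, 1 ≤ d i) {J Jc : ChainVert d} (hJ : IsBoxCorner J.1)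
    (hJc : Jc.1 = mirror J.1) : (chainGraph d).dist J Jc = 3 := by
  obtain ⟨hreach, hle⟩ := chainGraph_reachable_and_dist_le_three_of_mirror hd hJ hJc
  have hinc : ¬SymmGen (· ≤ ·) J.1 Jc.1 := hJc ▸ hJ.not_symmGen_mirror J.2.1 J.2.2
  suffices 2 < (chainGraph d).dist J Jc by omega
  have hne : J ≠ Jc := fun h => hinc (h ▸ SymmGen.rfl)
  have hcommon : (chainGraph d).commonNeighbors J Jc = ∅ := by
    ext X
    simp only [mem_commonNeighbors, Set.mem_empty_iff_false, iff_false, not_and]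
    intro hX hXc
    rcases (chainGraph_adj_iff_s18.1 hX).2 with h | h <;>
      rcases (chainGraph_adj_iff_s18.1 hXc).2 with h' | h'
    · refine X.2.2 (top_le_iff.1 ?_)
      calc ⊤ = J.1 ⊔ Jc.1 := by rw [hJc, hJ.sup_mirror]
        _ ≤ X.1 := sup_le h h'
    · exact hinc (Or.inl (h.trans h'))
    · exact hinc (Or.inr (h'.trans h))
    · refine X.2.1 (le_bot_iff.1 ?_)
      calc X.1 ≤ J.1 ⊓ Jc.1 := le_inf h h'
        _ = ⊥ := by rw [hJc, hJ.inf_mirror]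
  have := two_lt_edist_iff.2 ⟨hne, fun h => hinc (chainGraph_adj_iff_s18.1 h).2, hcommon⟩
  rw [← hreach.coe_dist_eq_edist] at this
  exact_mod_cast this

end InclusionGraph

section StrongResolvingGraph

variable {m : ℕ} {d : Fin m → ℕ}

lemma mmd_of_dist_eq_two {I J : ChainVert d} (h : (chainGraph d).dist I J = 2)
    (hI : ∀ w, (chainGraph d).Adj I w → ¬IsMirrorPair J.1 w.1)
    (hJ : ∀ w, (chainGraph d).Adj J w → ¬IsMirrorPair I.1 w.1) : MMD (chainGraph d) I J :=
  ⟨fun hIJ => by simp [hIJ] at h,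
    fun w hw => h ▸ (chainGraph_reachable_and_dist_le_two (hI w hw)).2,
    fun w hw => h ▸ (chainGraph_reachable_and_dist_le_two (hJ w hw)).2⟩

lemma mmd_of_not_isBoxCorner (hd : ∀ i, 1 ≤ d i) {I J : ChainVert d} (hI : ¬IsBoxCorner I.1)
    (hJ : ¬IsBoxCorner J.1) (h : ¬SymmGen (· ≤ ·) I.1 J.1) : MMD (chainGraph d) I J :=
  mmd_of_dist_eq_two
    (le_antisymm (chainGraph_reachable_and_dist_le_two fun p => hI p.1).2
      (two_le_chainGraph_dist hd h))
    (fun _ _ p => hJ p.1) fun _ _ p => hI p.1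

lemma mmd_of_not_symmGen_mirror (hd : ∀ i, 1 ≤ d i) {I J : ChainVert d}
    (h₁ : ¬SymmGen (· ≤ ·) I.1 J.1) (h₂ : ¬SymmGen (· ≤ ·) I.1 (mirror J.1)) :
    MMD (chainGraph d) I J := by
  refine mmd_of_dist_eq_two (le_antisymm (chainGraph_reachable_and_dist_le_two fun p => h₂ ?_).2
    (two_le_chainGraph_dist hd h₁)) (fun w hw p => h₂ ?_) fun w hw p => h₂ ?_
  · rw [p.2, mirror_mirror]
  · rw [← p.2]
    exact (chainGraph_adj_iff_s18.1 hw).2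
  · have h := (chainGraph_adj_iff_s18.1 hw).2
    rw [p.2] at h
    exact h.imp le_mirror_comm.1 mirror_le_comm.1

lemma mmd_mirror (hd : ∀ i, 1 ≤ d i) {J Jc : ChainVert d} (hJ : IsBoxCorner J.1)
    (hJc : Jc.1 = mirror J.1) : MMD (chainGraph d) J Jc :=
  ⟨fun h => hJ.ne_mirror_self J.2.1 (by rw [← hJc, h]),
    fun w _ => (chainGraph_dist_mirror hd hJ hJc).symm ▸ chainGraph_dist_le_three hd _ _,
    fun w _ => (chainGraph_dist_mirror hd hJ hJc).symm ▸ chainGraph_dist_le_three hd _ _⟩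

lemma compatible_of_not_mmd (hd : ∀ i, 1 ≤ d i) {I J : ChainVert d}
    (h : ¬MMD (chainGraph d) I J) : Compatible I.1 J.1 := by
  refine ⟨fun hI hJ => ?_, fun hJ => ⟨?_, fun he => ?_⟩⟩
  · by_contra hc
    exact h (mmd_of_not_isBoxCorner hd hI hJ hc)
  · by_contra hc
    rw [not_or] at hc
    exact h (mmd_of_not_symmGen_mirror hd hc.1 hc.2)
  · exact h ((strongResolvingGraph (chainGraph d)).adj_symm (mmd_mirror hd hJ he))

lemma not_mmd_of_lt (hm : 2 ≤ m) (hd : ∀ i, 1 ≤ d i) {I J : ChainVert d} (h : I.1 < J.1) :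
    ¬MMD (chainGraph d) I J := by
  rintro ⟨-, hI, hJ⟩
  have hIJ : (chainGraph d).dist I J = 1 := dist_eq_one_iff_adj.2 (Or.inl h)
  have : Nontrivial (Fin m) := Fin.nontrivial_iff_two_le.2 hm
  -- in either case the new vertex is adjacent to one end and incomparable with the other
  rcases exists_ne_coord_of_lt I.2.1 h with ⟨k, j, hkj, hk, hj⟩ | ⟨k, j, hkj, hk, hj⟩
  · set w := Function.update J.1 k 0
    have hIw : ¬I.1 ≤ w := fun hle => hk (nonpos_iff_eq_zero.1 (by simpa [w] using hle k))
    have hwI : ¬w ≤ I.1 := fun hle => (hj.trans_le (by simpa [w, hkj.symm] using hle j)).false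
    have hwJ : w < J.1 := lt_of_le_of_ne (update_le_iff.2 ⟨Fin.zero_le _, fun _ _ => le_rfl⟩)
      fun e => hIw (e ▸ h.le)
    let W : ChainVert d :=
      ⟨w, fun e => hwI (by rw [e]; exact bot_le), fun e => hIw (by rw [e]; exact le_top)⟩
    have hdist := hJ W (Or.inr hwJ)
    have := two_le_chainGraph_dist hd (I := I) (J := W) fun hc => hc.elim hIw hwI
    omega
  · set w := Function.update I.1 k (Fin.last _)
    have hwJ : ¬w ≤ J.1 := fun hle => hk (Fin.last_le_iff.1 (by simpa [w] using hle k))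
    have hJw : ¬J.1 ≤ w := fun hle => (hj.trans_le (by simpa [w, hkj.symm] using hle j)).false
    have hIw : I.1 < w := lt_of_le_of_ne (le_update_iff.2 ⟨Fin.le_last _, fun _ _ => le_rfl⟩)
      fun e => hwJ (e ▸ h.le)
    let W : ChainVert d :=
      ⟨w, fun e => hwJ (by rw [e]; exact bot_le), fun e => hJw (by rw [e]; exact le_top)⟩
    have hdist := hI W (Or.inl hIw)
    have := two_le_chainGraph_dist hd (I := J) (J := W) fun hc => hc.elim hJw hwJ
    omega

theorem card_le_of_isIndepFinset (hd : ∀ i, 1 ≤ d i) {S : Finset (ChainVert d)}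
    (hS : IsIndepFinset (strongResolvingGraph (chainGraph d)) S) : #S ≤ ∑ i, d i + m - 1 := by
  rcases S.eq_empty_or_nonempty with rfl | ⟨I₀, -⟩
  · simp
  set T := S.map (Function.Embedding.subtype _)
  have hTS : #T = #S := card_map _
  have hmemT : ∀ v ∈ T, ∃ I ∈ S, I.1 = v := fun v hv => by
    obtain ⟨I, hI, rfl⟩ := mem_map.1 hv
    exact ⟨I, hI, rfl⟩
  have hbt : (⊥ : ∀ i, Fin (d i + 2)) ≠ ⊤ :=
    ((bot_lt_iff_ne_bot.2 I₀.2.1).trans_le le_top).ne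
  have := coordSum_add_card_lt_coordSum_top hd T ⊥ (Or.inl rfl) hbt ?_ ?_ ?_
  · rw [coordSum_bot, coordSum_top, Fintype.card_fin] at this
    omega
  · intro v hv
    obtain ⟨I, -, rfl⟩ := hmemT v hv
    exact I.2
  · intro u hu v hv huv
    obtain ⟨I, hI, rfl⟩ := hmemT u hu
    obtain ⟨J, hJ, rfl⟩ := hmemT v hv
    exact compatible_of_not_mmd hd (hS I hI J hJ fun e => huv (e ▸ rfl))
  · intro v hv
    obtain ⟨I, -, rfl⟩ := hmemT v hv
    exact Or.inl (bot_lt_iff_ne_bot.2 I.2.1)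

theorem exists_isIndepFinset_card (hm : 2 ≤ m) (hd : ∀ i, 1 ≤ d i) :
    ∃ S : Finset (ChainVert d), #S = ∑ i, d i + m - 1 ∧
      IsIndepFinset (strongResolvingGraph (chainGraph d)) S := by
  obtain ⟨T, hcard, hT, hchain⟩ := exists_isChain_card (d := d)
  refine ⟨T.subtype fun v => v ≠ ⊥ ∧ v ≠ ⊤, ?_, fun I hI J hJ hne hadj => ?_⟩
  · have h : #(T.subtype fun v => v ≠ ⊥ ∧ v ≠ ⊤) = #T := by
      rw [card_subtype, filter_true_of_mem hT]
    exact h.trans (hcard.trans (by rw [coordSum_top, Fintype.card_fin]))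
  have hne' : I.1 ≠ J.1 := fun e => hne (Subtype.ext e)
  rcases hchain (mem_subtype.1 hI) (mem_subtype.1 hJ) hne' with h | h
  · exact not_mmd_of_lt hm hd (lt_of_le_of_ne h hne') hadj
  · exact not_mmd_of_lt hm hd (lt_of_le_of_ne h hne'.symm) hadj.symm

end StrongResolvingGraph

theorem stmt18 (m : ℕ) (hm : 2 ≤ m) (d : Fin m → ℕ) (hd : ∀ i, 1 ≤ d i) :
    _root_.indepNum (strongResolvingGraph (chainGraph d)) = (∑ i, d i) + m - 1 := by
  obtain ⟨S, hcard, hS⟩ := exists_isIndepFinset_card hm hd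
  exact IsGreatest.csSup_eq
    ⟨⟨S, hcard, hS⟩, fun _ ⟨T, hT, hTi⟩ => hT ▸ card_le_of_isIndepFinset hd hTi⟩
end
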